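/- arXiv:2404.06307 — 10 statements merged into one kernel-verified Lean document; each statement's English description precedes it below -/
import Mathlib

section
/- Let G be a finite group, p a prime, and H a p-subgroup of G which is extremely closed in G. Then for every g ∈ G, H is a Sylow p-subgroup of ⟨H, H^g⟩ and N_T(H) = H where T = ⟨H, H^g⟩. -/
open Pointwise

/-- `H` is extremely closed in `G`. -/
def IsExtremelyClosed {G : Type*} [Group G] (H : Subgroup G) : Prop :=
  ∀ g : G, (H ⊔ MulAut.conj g • H) ⊓ Subgroup.normalizer (H : Set G) = H

theorem stmt5 {G : Type*} [Group G] [Finite G] (p : ℕ) [Fact p.Prime]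
    (H : Subgroup G) (hp : IsPGroup p H) (hH : IsExtremelyClosed H) (g : G) :
    (H ≤ H ⊔ MulAut.conj g • H ∧
      ∀ Q : Subgroup G, Q ≤ H ⊔ MulAut.conj g • H → IsPGroup p Q → H ≤ Q → Q = H) ∧
    Subgroup.normalizer (H : Set G) ⊓ (H ⊔ MulAut.conj g • H) = H := by
  have key := hH g
  refine ⟨⟨le_sup_left, fun Q hQT hQp hHQ => ?_⟩, by rw [inf_comm]; exact key⟩
  -- Q is a finite p-group, hence nilpotent, satisfies the normalizer condition
  haveI : Group.IsNilpotent Q := hQp.isNilpotent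
  have hnc : NormalizerCondition Q := normalizerCondition_of_isNilpotent
  have htop : H.subgroupOf Q = ⊤ := by
    apply normalizerCondition_iff_only_full_group_self_normalizing.mp hnc
    apply le_antisymm _ Subgroup.le_normalizer
    intro x hx
    -- show ↑x ∈ H using extreme closedness
    have hxH : (x : G) ∈ H := by
      have hxN : (x : G) ∈ Subgroup.normalizer (H : Set G) := by
        rw [Subgroup.mem_normalizer_iff]
        intro h
        constructor
        · intro hh
          have hhQ : h ∈ Q := hHQ hh
          have := (Subgroup.mem_normalizer_iff.mp hx ⟨h, hhQ⟩).mp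
            (by simpa [Subgroup.mem_subgroupOf] using hh)
          simpa [Subgroup.mem_subgroupOf] using this
        · intro hh
          have hhQ : h ∈ Q := by
            have h2 : x * h * x⁻¹ ∈ Q := hHQ hh
            have h3 : (x : G)⁻¹ * (x * h * x⁻¹) * x ∈ Q :=
              Q.mul_mem (Q.mul_mem (Q.inv_mem x.2) h2) x.2
            simpa [mul_assoc] using h3
          have := (Subgroup.mem_normalizer_iff.mp hx ⟨h, hhQ⟩).mpr
            (by simpa [Subgroup.mem_subgroupOf] using hh)
          simpa [Subgroup.mem_subgroupOf] using this
      have : (x : G) ∈ (H ⊔ MulAut.conj g • H) ⊓ Subgroup.normalizer (H : Set G) :=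
        ⟨hQT x.2, hxN⟩
      rw [key] at this
      exact this
    simpa [Subgroup.mem_subgroupOf] using hxH
  -- from H.subgroupOf Q = ⊤ deduce Q ≤ H
  apply le_antisymm _ hHQ
  intro q hq
  have : (⟨q, hq⟩ : Q) ∈ H.subgroupOf Q := htop ▸ Subgroup.mem_top _
  simpa [Subgroup.mem_subgroupOf] using this
end

section
/- Let G be a finite group, p a prime, and H a p-subgroup of G which is extremely closed in G. Then H is pronormal in G. -/
open Pointwise

namespace ECAux

variable {G : Type*} [Group G]

theorem smul_normalizer (a : MulAut G) (S : Subgroup G) :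
    Subgroup.normalizer ((a • S : Subgroup G) : Set G) = a • Subgroup.normalizer (S : Set G) :=
  (Subgroup.map_equiv_normalizer_eq S a).symm

theorem normalizer_subgroupOf {H K : Subgroup G} (hHK : H ≤ K) :
    Subgroup.normalizer ((H.subgroupOf K : Subgroup K) : Set K) =
      (Subgroup.normalizer (H : Set G) ⊓ K).subgroupOf K := by
  ext x
  simp only [Subgroup.mem_normalizer_iff, Subgroup.mem_subgroupOf, Subgroup.mem_inf,
    SetLike.coe_mem, and_true]
  constructor
  · intro hx g
    constructor
    · intro hg
      exact (hx ⟨g, hHK hg⟩).mp hg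
    · intro hg
      have hgK : g ∈ K := by
        have : (x : G) * g * (x : G)⁻¹ ∈ K := hHK hg
        have := K.mul_mem (K.mul_mem (K.inv_mem x.2) this) x.2
        simpa [mul_assoc] using this
      have := (hx ⟨g, hgK⟩).mpr hg
      exact this
  · intro hx h
    exact hx h

end ECAux

/-- `H` is pronormal in `G`. -/
def IsPronormal {G : Type*} [Group G] (H : Subgroup G) : Prop :=
  ∀ g : G, ∃ u ∈ H ⊔ MulAut.conj g • H, MulAut.conj g • H = MulAut.conj u • H

theorem stmt6 {G : Type*} [Group G] [Finite G] (p : ℕ) [Fact p.Prime]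
    (H : Subgroup G) (hp : IsPGroup p H) (hH : IsExtremelyClosed H) :
    IsPronormal H := by
  intro g
  set Hg : Subgroup G := MulAut.conj g • H with hHg
  set K : Subgroup G := H ⊔ Hg with hKdef
  have hHK : H ≤ K := le_sup_left
  have hHgK : Hg ≤ K := le_sup_right
  -- the two extreme closure facts
  have hK1 : K ⊓ Subgroup.normalizer (H : Set G) = H := hH g
  have hK2 : K ⊓ Subgroup.normalizer (Hg : Set G) = Hg := by
    have hconj : MulAut.conj g • (H ⊔ MulAut.conj g⁻¹ • H) = K := by
      rw [Subgroup.smul_sup, smul_smul]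
      simp [hKdef, hHg, sup_comm]
    calc K ⊓ Subgroup.normalizer (Hg : Set G)
        = MulAut.conj g • ((H ⊔ MulAut.conj g⁻¹ • H) ⊓ Subgroup.normalizer (H : Set G)) := by
          rw [Subgroup.smul_inf, hconj, hHg, ECAux.smul_normalizer]
      _ = Hg := by rw [hH g⁻¹, hHg]
  -- subgroups of K
  have hpHg : IsPGroup p Hg := by
    have := hp.map (MulAut.conj g).toMonoidHom
    exact this
  have hp' : IsPGroup p (H.subgroupOf K) := hp.comap_subtype
  have hpg' : IsPGroup p (Hg.subgroupOf K) := hpHg.comap_subtype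
  -- self-normalizing in K
  have hn1 : Subgroup.normalizer ((H.subgroupOf K : Subgroup K) : Set K) = H.subgroupOf K := by
    rw [ECAux.normalizer_subgroupOf hHK, Subgroup.subgroupOf_inj, inf_comm (Subgroup.normalizer (H : Set G)) K, hK1,
      inf_of_le_left hHK]
  have hn2 : Subgroup.normalizer ((Hg.subgroupOf K : Subgroup K) : Set K) = Hg.subgroupOf K := by
    rw [ECAux.normalizer_subgroupOf hHgK, Subgroup.subgroupOf_inj, inf_comm (Subgroup.normalizer (Hg : Set G)) K, hK2,
      inf_of_le_left hHgK]
  -- a self-normalizing p-subgroup of K is Sylow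
  have key : ∀ (S : Subgroup K), IsPGroup p S → Subgroup.normalizer (S : Set K) = S →
      ∃ P : Sylow p K, S = P := by
    intro S hS hSn
    obtain ⟨P, hSP⟩ := hS.exists_le_sylow
    refine ⟨P, ?_⟩
    by_contra hne
    have hlt : S < (P : Subgroup K) := lt_of_le_of_ne hSP fun h => hne (by simpa using h)
    have hnil : Group.IsNilpotent (P : Subgroup K) := P.isPGroup'.isNilpotent
    have hltP : S.subgroupOf (P : Subgroup K) < ⊤ := by
      rw [lt_top_iff_ne_top]
      intro htop
      rw [Subgroup.subgroupOf_eq_top] at htop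
      exact absurd (le_antisymm hSP htop) hne
    have := normalizerCondition_of_isNilpotent (G := (P : Subgroup K)) _ hltP
    rw [ECAux.normalizer_subgroupOf hSP, hSn, inf_of_le_left hSP] at this
    exact lt_irrefl _ this
  obtain ⟨P, hP⟩ := key _ hp' hn1
  obtain ⟨Q, hQ⟩ := key _ hpg' hn2
  -- Sylow subgroups are conjugate
  obtain ⟨k, hk⟩ := MulAction.exists_smul_eq K P Q
  refine ⟨(k : G), k.2, ?_⟩
  have hsub : (MulAut.conj (k : G) • H).subgroupOf K = Hg.subgroupOf K := by
    rw [← Subgroup.conj_smul_subgroupOf hHK k, hP, hQ, ← Sylow.coe_subgroup_smul, hk]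
  have hle : MulAut.conj (k : G) • H ≤ K := Subgroup.conj_smul_le_of_le hHK k
  rw [Subgroup.subgroupOf_inj, inf_of_le_left hle, inf_of_le_left hHgK] at hsub
  exact hsub.symm
end

section
/- Let G be a finite group, p a prime, and H an abelian p-subgroup of G which is extremely closed in G. Then for every g ∈ G, ⟨H, H^g⟩ = H·O_{p'}(⟨H, H^g⟩), i.e., ⟨H, H^g⟩ has a normal p-complement with complement H. -/
open Pointwise

theorem stmt9 {G : Type*} [Group G] [Finite G] (p : ℕ) [Fact p.Prime]
    (H : Subgroup G) (hp : IsPGroup p H)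
    (hab : ∀ x ∈ H, ∀ y ∈ H, x * y = y * x)
    (hH : IsExtremelyClosed H) (g : G) :
    ∃ K : Subgroup ↥(H ⊔ MulAut.conj g • H), K.Normal ∧
      Nat.Coprime p (Nat.card K) ∧
      H.subgroupOf (H ⊔ MulAut.conj g • H) ⊔ K = ⊤ ∧
      H.subgroupOf (H ⊔ MulAut.conj g • H) ⊓ K = ⊥ := by
  set L : Subgroup G := H ⊔ MulAut.conj g • H with hLdef
  have hHL : H ≤ L := le_sup_left
  set H' : Subgroup ↥L := H.subgroupOf L with hH'def
  -- H' is a p-group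
  have hpH' : IsPGroup p H' := hp.of_equiv (Subgroup.subgroupOfEquivOfLe hHL).symm
  -- H' is self-normalizing in L
  have key : Subgroup.normalizer (H' : Set ↥L) = H' := by
    refine le_antisymm ?_ Subgroup.le_normalizer
    intro x hx
    have hxn : (x : G) ∈ Subgroup.normalizer (H : Set G) := by
      apply Subgroup.mem_normalizer_fintype
      intro n hn
      have hnH' : (⟨n, hHL hn⟩ : ↥L) ∈ H' := hn
      have := (Subgroup.mem_normalizer_iff.mp hx ⟨n, hHL hn⟩).mp hnH'
      exact this
    have hmem : (x : G) ∈ L ⊓ Subgroup.normalizer (H : Set G) := ⟨x.2, hxn⟩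
    rw [hH g] at hmem
    exact hmem
  -- H' is a Sylow p-subgroup of L
  let S : Sylow p ↥L :=
    { toSubgroup := H'
      isPGroup' := hpH'
      is_maximal' := by
        intro Q hQ hle
        refine le_antisymm ?_ hle
        -- Work inside the p-group Q, which is nilpotent
        haveI : Finite ↥Q := Subtype.finite
        have hnil : Group.IsNilpotent ↥Q := hQ.isNilpotent
        have hNC : NormalizerCondition ↥Q := normalizerCondition_of_isNilpotent
        have htop : Subgroup.normalizer ((H'.subgroupOf Q : Subgroup ↥Q) : Set ↥Q) = H'.subgroupOf Q := by
          refine le_antisymm ?_ Subgroup.le_normalizer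
          intro x hx
          have hxn : (x : ↥L) ∈ Subgroup.normalizer (H' : Set ↥L) := by
            apply Subgroup.mem_normalizer_fintype
            intro n hn
            have hnQ : n ∈ Q := hle hn
            have hnH'' : (⟨n, hnQ⟩ : ↥Q) ∈ H'.subgroupOf Q := hn
            exact (Subgroup.mem_normalizer_iff.mp hx ⟨n, hnQ⟩).mp hnH''
          rw [key] at hxn
          exact hxn
        have : H'.subgroupOf Q = ⊤ :=
          (normalizerCondition_iff_only_full_group_self_normalizing.mp hNC) _ htop
        exact Subgroup.subgroupOf_eq_top.mp this }
  -- Burnside's condition: N(S) ≤ C(S)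
  have hNC : Subgroup.normalizer (S : Set ↥L) ≤ Subgroup.centralizer (S : Set ↥L) := by
    intro x hx
    have hxH' : x ∈ H' := by
      have : x ∈ Subgroup.normalizer (H' : Set ↥L) := hx
      rwa [key] at this
    intro m hm
    have hmH : (m : G) ∈ H := hm
    have hxH : (x : G) ∈ H := hxH'
    exact Subtype.ext (hab (m : G) hmH (x : G) hxH)
  
  exact ⟨(MonoidHom.transferSylow S hNC).ker, MonoidHom.normal_ker _,
    (Nat.Prime.coprime_iff_not_dvd Fact.out).mpr
      (MonoidHom.not_dvd_card_ker_transferSylow S hNC),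
    by rw [sup_comm]; exact (MonoidHom.ker_transferSylow_isComplement' S hNC).sup_eq_top,
    by rw [inf_comm]; exact (MonoidHom.ker_transferSylow_isComplement' S hNC).disjoint.eq_bot⟩
end

section
/- Let G be a finite group, p a prime, N a normal subgroup of G, and H a p-subgroup of G which is extremely closed in G. Then HN/N is extremely closed in G/N. -/
open Pointwise

section Aux

variable {G : Type*} [Group G] [Finite G] {p : ℕ} [Fact p.Prime]

/-- A `p`-subgroup `Q` containing `H` with `Q ⊓ N_G(H) ≤ H` equals `H`. -/
lemma aux_pSubgroup_eq {H Q : Subgroup G} (hQ : IsPGroup p Q) (hHQ : H ≤ Q)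
    (hnorm : Q ⊓ Subgroup.normalizer (H : Set G) ≤ H) : Q = H := by
  have hnil : Group.IsNilpotent ↥Q := hQ.isNilpotent
  have hnc : NormalizerCondition ↥Q := normalizerCondition_of_isNilpotent
  by_contra hne
  have hlt : H.subgroupOf Q < ⊤ := by
    rw [lt_top_iff_ne_top]
    intro htop
    rw [Subgroup.subgroupOf_eq_top] at htop
    exact hne (le_antisymm htop hHQ)
  obtain ⟨x, hxn, hxH⟩ := SetLike.exists_of_lt (hnc _ hlt)
  apply hxH
  rw [Subgroup.mem_subgroupOf]
  have hxnorm : (x : G) ∈ Subgroup.normalizer (H : Set G) := by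
    rw [Subgroup.mem_normalizer_iff]
    intro h
    constructor
    · intro hh
      have hhQ : h ∈ Q := hHQ hh
      have h2 := (Subgroup.mem_normalizer_iff.mp hxn ⟨h, hhQ⟩).mp
        (by rwa [Subgroup.mem_subgroupOf])
      rw [Subgroup.mem_subgroupOf] at h2
      simpa using h2
    · intro hh
      have hQc : (x : G) * h * (x : G)⁻¹ ∈ Q := hHQ hh
      have hhQ : h ∈ Q := by
        have h3 := Q.mul_mem (Q.mul_mem (Q.inv_mem x.2) hQc) x.2
        simpa [mul_assoc] using h3
      have h2 := (Subgroup.mem_normalizer_iff.mp hxn ⟨h, hhQ⟩).mpr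
        (by rw [Subgroup.mem_subgroupOf]; simpa using hh)
      rwa [Subgroup.mem_subgroupOf] at h2
  exact hnorm ⟨x.2, hxnorm⟩

/-- Frattini-type argument: if `H ≤ L ≤ K`, `H` is a `p`-group with
`K ⊓ N_G(H) = H`, then elements of `K` normalizing `L` lie in `L`. -/
lemma aux_frattini {H K L : Subgroup G} (hp : IsPGroup p H) (hHK : H ≤ K)
    (hEC : K ⊓ Subgroup.normalizer (H : Set G) = H) (hHL : H ≤ L) (hLK : L ≤ K) :
    K ⊓ Subgroup.normalizer (L : Set G) ≤ L := by
  have hmapH : (H.subgroupOf L).map L.subtype = H := by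
    rw [Subgroup.subgroupOf_map_subtype, inf_of_le_left hHL]
  -- `H.subgroupOf L` is a Sylow `p`-subgroup of `L`.
  have hmax : ∀ {Q : Subgroup ↥L}, IsPGroup p Q → H.subgroupOf L ≤ Q →
      Q = H.subgroupOf L := by
    intro Q hQ hle
    have h1 : Q.map L.subtype = H := by
      apply aux_pSubgroup_eq (hQ.map _)
      · rw [← hmapH]
        exact Subgroup.map_mono hle
      · refine le_trans (inf_le_inf_right _ ?_) hEC.le
        exact le_trans (Subgroup.map_subtype_le Q) hLK
    apply Subgroup.map_injective L.subtype_injective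
    rw [h1, hmapH]
  let S : Sylow p ↥L :=
    ⟨H.subgroupOf L, hp.comap_of_injective L.subtype L.subtype_injective,
      fun hQ hle => hmax hQ hle⟩
  have hS : (S : Subgroup ↥L) = H.subgroupOf L := rfl
  rintro x ⟨hxK, hxn⟩
  -- the conjugate subgroup `x H x⁻¹` lies in `L`
  have hconj : MulAut.conj x • H ≤ L := by
    intro y hy
    rw [Subgroup.mem_pointwise_smul_iff_inv_smul_mem] at hy
    have hy' : x⁻¹ * y * x ∈ H := by
      simpa [MulAut.smul_def] using hy
    have h4 := (Subgroup.mem_normalizer_iff.mp hxn (x⁻¹ * y * x)).mp (hHL hy')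
    simpa [mul_assoc] using h4
  have hpA : IsPGroup p (MulAut.conj x • H : Subgroup G) := by
    rw [Subgroup.pointwise_smul_def]
    exact hp.map _
  have hfin : Finite (Sylow p ↥L) := by infer_instance
  obtain ⟨T, hT⟩ :=
    (hpA.comap_of_injective L.subtype L.subtype_injective).exists_le_sylow
  obtain ⟨l, hl⟩ := MulAction.exists_smul_eq ↥L T S
  -- conjugating by `l` carries `x H x⁻¹` into `H`
  have hconj2 : ∀ y ∈ (MulAut.conj x • H : Subgroup G), (l : G) * y * (l : G)⁻¹ ∈ H := by
    intro y hy
    have hyL : y ∈ L := hconj hy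
    have hyT : (⟨y, hyL⟩ : ↥L) ∈ (T : Subgroup ↥L) := by
      apply hT
      rw [Subgroup.mem_comap]
      exact hy
    have h5 : (l * ⟨y, hyL⟩ * l⁻¹ : ↥L) ∈ (S : Subgroup ↥L) := by
      rw [← hl, Sylow.coe_subgroup_smul, Subgroup.mem_pointwise_smul_iff_inv_smul_mem]
      simpa [MulAut.smul_def, mul_assoc] using hyT
    rw [hS, Subgroup.mem_subgroupOf] at h5
    simpa using h5
  -- hence `l * x` normalizes `H`
  have hc : (l : G) * x ∈ Subgroup.normalizer (H : Set G) := by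
    apply Subgroup.mem_normalizer_fintype
    intro n hn
    have hn' : x * n * x⁻¹ ∈ (MulAut.conj x • H : Subgroup G) := by
      rw [Subgroup.mem_pointwise_smul_iff_inv_smul_mem]
      simpa [MulAut.smul_def, mul_assoc] using hn
    have := hconj2 _ hn'
    simpa [mul_assoc] using this
  have hcH : (l : G) * x ∈ H := by
    rw [← hEC]
    exact ⟨K.mul_mem (hLK l.2) hxK, hc⟩
  have : x = (l : G)⁻¹ * ((l : G) * x) := by group
  rw [this]
  exact L.mul_mem (L.inv_mem l.2) (hHL hcH)

/-- Key lemma at the level of `G`: members of `K = ⟨H, H^g⟩` normalizing `HN`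
lie in `HN`. -/
lemma aux_key {H N : Subgroup G} (hN : N.Normal) (hp : IsPGroup p H)
    (hH : IsExtremelyClosed H) (g : G) {k : G}
    (hk : k ∈ H ⊔ MulAut.conj g • H) (hkn : k ∈ Subgroup.normalizer ((H ⊔ N : Subgroup G) : Set G)) :
    k ∈ H ⊔ N := by
  set K := H ⊔ MulAut.conj g • H with hK
  have hHK : H ≤ K := le_sup_left
  have hEC : K ⊓ Subgroup.normalizer (H : Set G) = H := hH g
  set L := H ⊔ (N ⊓ K) with hL
  have hHL : H ≤ L := le_sup_left
  have hLK : L ≤ K := sup_le hHK inf_le_right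
  -- Dedekind: (H ⊔ N) ⊓ K = L
  have hded : (H ⊔ N) ⊓ K = L := by
    apply le_antisymm
    · rintro x ⟨hx1, hx2⟩
      have : x ∈ (↑H * ↑N : Set G) := by
        rw [← Subgroup.mul_normal H N]
        exact hx1
      obtain ⟨h, hh, n, hn, rfl⟩ := this
      have hnK : n ∈ K := by
        have : h⁻¹ * (h * n) ∈ K := K.mul_mem (K.inv_mem (hHK hh)) hx2
        simpa using this
      exact Subgroup.mul_mem_sup hh ⟨hn, hnK⟩
    · exact sup_le (le_inf le_sup_left hHK) (le_inf (inf_le_left.trans le_sup_right) inf_le_right)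
  -- k normalizes L
  have hkL : k ∈ Subgroup.normalizer (L : Set G) := by
    rw [← hded]
    rw [Subgroup.mem_normalizer_iff] at hkn ⊢
    intro h
    constructor
    · rintro ⟨h1, h2⟩
      exact ⟨(hkn h).mp h1, (Subgroup.mem_normalizer_iff.mp (Subgroup.le_normalizer hk) h).mp h2⟩
    · rintro ⟨h1, h2⟩
      exact ⟨(hkn h).mpr h1, (Subgroup.mem_normalizer_iff.mp (Subgroup.le_normalizer hk) h).mpr h2⟩
  have : k ∈ L := aux_frattini hp hHK hEC hHL hLK ⟨hk, hkL⟩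
  exact (sup_le_sup_left inf_le_left H) this

end Aux

theorem stmt10 {G : Type*} [Group G] [Finite G] (p : ℕ) [Fact p.Prime]
    (H N : Subgroup G) (hN : N.Normal) (hp : IsPGroup p H)
    (hH : IsExtremelyClosed H) :
    IsExtremelyClosed (H.map (QuotientGroup.mk' N)) := by
  intro gbar
  apply le_antisymm
  · intro xbar hxbar
    obtain ⟨hx1, hx2⟩ := hxbar
    obtain ⟨g, rfl⟩ := QuotientGroup.mk'_surjective N gbar
    -- rewrite the conjugate as an image
    have hconj : MulAut.conj (QuotientGroup.mk' N g) • H.map (QuotientGroup.mk' N)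
        = (MulAut.conj g • H).map (QuotientGroup.mk' N) := by
      ext y
      rw [Subgroup.mem_pointwise_smul_iff_inv_smul_mem]
      simp only [Subgroup.mem_map, Subgroup.mem_pointwise_smul_iff_inv_smul_mem,
        MulAut.smul_def, MulAut.conj_inv_apply]
      constructor
      · rintro ⟨h, hh, hmk⟩
        refine ⟨g * h * g⁻¹, by simpa [mul_assoc] using hh, ?_⟩
        have : y = QuotientGroup.mk' N g * QuotientGroup.mk' N h * (QuotientGroup.mk' N g)⁻¹ := by
          rw [hmk]; group
        rw [this]
        simp [map_mul, map_inv]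
      · rintro ⟨h, hh, rfl⟩
        exact ⟨g⁻¹ * h * g, hh, by simp [map_mul, map_inv, mul_assoc]⟩
    rw [hconj, ← Subgroup.map_sup] at hx1
    obtain ⟨k, hk, rfl⟩ := hx1
    -- k normalizes H ⊔ N
    have hHN : (H.map (QuotientGroup.mk' N)).comap (QuotientGroup.mk' N) = H ⊔ N := by
      rw [Subgroup.comap_map_eq, QuotientGroup.ker_mk']
    have hkn : k ∈ Subgroup.normalizer ((H ⊔ N : Subgroup G) : Set G) := by
      rw [Subgroup.mem_normalizer_iff]
      intro h
      rw [← hHN, Subgroup.mem_comap, Subgroup.mem_comap]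
      have := Subgroup.mem_normalizer_iff.mp hx2 (QuotientGroup.mk' N h)
      simpa [map_mul, map_inv] using this
    have hmem : k ∈ H ⊔ N := aux_key hN hp hH g hk hkn
    rw [Subgroup.mem_map]
    have : QuotientGroup.mk' N k ∈ (H.map (QuotientGroup.mk' N)) := by
      rw [← hHN, Subgroup.mem_comap] at hmem
      exact hmem
    exact this
  · exact le_inf le_sup_left Subgroup.le_normalizer
end

section
/- Let G be a finite group, p a prime, and H a p-subgroup of G which is extremely closed in G. If H ≤ Q ≤ G where Q is a p-group, then N_G(Q) ≤ N_G(H). In particular, if H ≤ P for a Sylow p-subgroup P of G, then P ≤ N_G(H). -/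
open Pointwise

theorem stmt11 {G : Type*} [Group G] [Finite G] (p : ℕ) [Fact p.Prime]
    (H : Subgroup G) (hp : IsPGroup p H) (hH : IsExtremelyClosed H) :
    (∀ Q : Subgroup G, IsPGroup p Q → H ≤ Q → Subgroup.normalizer (Q : Set G) ≤ Subgroup.normalizer (H : Set G)) ∧
    ∀ P : Sylow p G, H ≤ P → (P : Subgroup G) ≤ Subgroup.normalizer (H : Set G) := by
  have main : ∀ Q : Subgroup G, IsPGroup p Q → H ≤ Q → Subgroup.normalizer (Q : Set G) ≤ Subgroup.normalizer (H : Set G) := by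
    intro Q hQ hHQ g hg
    -- the conjugate of H by g lies in Q
    have hHgQ : MulAut.conj g • H ≤ Q := by
      intro x hx
      rw [Subgroup.mem_smul_pointwise_iff_exists] at hx
      obtain ⟨h, hh, rfl⟩ := hx
      have := (Subgroup.mem_normalizer_iff.mp hg h).mp (hHQ hh)
      simpa using this
    set K : Subgroup G := H ⊔ MulAut.conj g • H with hK
    have hKQ : K ≤ Q := sup_le hHQ hHgQ
    have hKp : IsPGroup p K := hQ.to_le hKQ
    -- K = H
    have hHK : H ≤ K := le_sup_left
    have hKH : K = H := by
      by_contra hne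
      have hlt : H.subgroupOf K < ⊤ := lt_top_iff_ne_top.mpr fun h =>
        hne (le_antisymm (Subgroup.subgroupOf_eq_top.mp h) hHK)
      haveI : Finite K := Subtype.finite
      haveI := hKp.isNilpotent
      have hnc : NormalizerCondition K := normalizerCondition_of_isNilpotent
      have hlt2 := hnc _ hlt
      obtain ⟨x, hxN, hxH⟩ := SetLike.exists_of_lt hlt2
      -- x normalizes H in G
      have hxnorm : (x : G) ∈ Subgroup.normalizer (H : Set G) := by
        apply Subgroup.mem_normalizer_fintype
        intro n hn
        have hnK : n ∈ K := hHK hn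
        have : (⟨n, hnK⟩ : K) ∈ H.subgroupOf K := hn
        have hx := (Subgroup.mem_normalizer_iff.mp hxN ⟨n, hnK⟩).mp this
        exact hx
      have hxK : (x : G) ∈ K := x.2
      have : (x : G) ∈ (H ⊔ MulAut.conj g • H) ⊓ Subgroup.normalizer (H : Set G) := ⟨hxK, hxnorm⟩
      rw [hH g] at this
      exact hxH this
    have hle : MulAut.conj g • H ≤ H := le_trans (le_sup_right (a := H)) hKH.le
    apply Subgroup.mem_normalizer_fintype
    intro n hn
    apply hle
    rw [Subgroup.mem_smul_pointwise_iff_exists]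
    exact ⟨n, hn, by simp⟩
  exact ⟨main, fun P hHP x hx => main P P.isPGroup' hHP (Subgroup.le_normalizer hx)⟩
end

section
/- Let G be a finite group, p a prime, and H a p-subgroup of G which is extremely closed in G. If P is a Sylow p-subgroup of G containing H, then H is strongly closed in P with respect to G, i.e., H^g ∩ P ≤ H for all g ∈ G. -/
open Pointwise

theorem stmt12 {G : Type*} [Group G] [Finite G] (p : ℕ) [Fact p.Prime]
    (H : Subgroup G) (hp : IsPGroup p H) (hH : IsExtremelyClosed H)
    (P : Sylow p G) (hHP : H ≤ P) :
    ∀ g : G, (MulAut.conj g • H) ⊓ (P : Subgroup G) ≤ H := by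
  intro g x hx
  obtain ⟨hxg, hxP⟩ := hx
  set L : Subgroup G := H ⊔ Subgroup.zpowers x with hLdef
  have hHL : H ≤ L := le_sup_left
  have hxL : x ∈ L := Subgroup.mem_sup_right (Subgroup.mem_zpowers x)
  have hLP : L ≤ P := sup_le hHP (Subgroup.zpowers_le.2 hxP)
  have hLp : IsPGroup p L := P.isPGroup'.to_le hLP
  have hLsup : L ≤ H ⊔ MulAut.conj g • H :=
    sup_le le_sup_left (Subgroup.zpowers_le.2 (Subgroup.mem_sup_right hxg))
  have key : L ⊓ Subgroup.normalizer (H : Set G) = H := le_antisymm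
    (le_trans (inf_le_inf_right _ hLsup) (hH g).le)
    (le_inf hHL Subgroup.le_normalizer)
  have hLH : L = H := by
    by_contra hne
    have hlt : H.subgroupOf L < ⊤ := by
      rw [lt_top_iff_ne_top]
      intro htop
      apply hne
      refine le_antisymm (fun y hy => ?_) hHL
      have : (⟨y, hy⟩ : L) ∈ H.subgroupOf L := htop ▸ Subgroup.mem_top _
      exact this
    haveI : Group.IsNilpotent L := hLp.isNilpotent
    have hlt2 := normalizerCondition_of_isNilpotent (G := L) _ hlt
    obtain ⟨y, hyN, hyH⟩ := SetLike.exists_of_lt hlt2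
    have hyNG : (y : G) ∈ Subgroup.normalizer (H : Set G) := by
      rw [Subgroup.mem_normalizer_iff]
      intro n
      constructor
      · intro hn
        have hnL : n ∈ L := hHL hn
        have := (Subgroup.mem_normalizer_iff.mp hyN (⟨n, hnL⟩ : L)).mp
          (by simpa [Subgroup.mem_subgroupOf] using hn)
        simpa [Subgroup.mem_subgroupOf] using this
      · intro hn
        have hnL : n ∈ L := by
          have h1 : (y : G) * n * (y : G)⁻¹ ∈ L := hHL hn
          have h2 : (y : G)⁻¹ * ((y : G) * n * (y : G)⁻¹) * (y : G) ∈ L :=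
            Subgroup.mul_mem _ (Subgroup.mul_mem _ (Subgroup.inv_mem _ y.2) h1) y.2
          simpa [mul_assoc] using h2
        have := (Subgroup.mem_normalizer_iff.mp hyN (⟨n, hnL⟩ : L)).mpr
          (by simpa [Subgroup.mem_subgroupOf] using hn)
        simpa [Subgroup.mem_subgroupOf] using this
    have hyHmem : (y : G) ∈ H := key ▸ (⟨y.2, hyNG⟩ : (y : G) ∈ L ⊓ Subgroup.normalizer (H : Set G))
    exact hyH (by simpa [Subgroup.mem_subgroupOf] using hyHmem)
  exact hLH ▸ hxL
end

section
/- Let G be a finite group, p a prime, N a normal subgroup of G, and H a p-subgroup of G which is extremely closed in G. If N ≤ N_G(H), then H ∩ N is a normal subgroup of G. -/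
open Pointwise

theorem stmt13 {G : Type*} [Group G] [Finite G] (p : ℕ) [Fact p.Prime]
    (H N : Subgroup G) (hN : N.Normal) (hp : IsPGroup p H)
    (hH : IsExtremelyClosed H) (hNnorm : N ≤ Subgroup.normalizer (H : Set G)) :
    (H ⊓ N).Normal := by
  constructor
  intro x hx g
  obtain ⟨hxH, hxN⟩ := hx
  have hN' : g * x * g⁻¹ ∈ N := hN.conj_mem x hxN g
  have h1 : g * x * g⁻¹ ∈ MulAut.conj g • H := by
    have := Subgroup.smul_mem_pointwise_smul x (MulAut.conj g) H hxH
    simpa using this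
  have h2 : g * x * g⁻¹ ∈ (H ⊔ MulAut.conj g • H) ⊓ Subgroup.normalizer (H : Set G) :=
    ⟨Subgroup.mem_sup_right h1, hNnorm hN'⟩
  rw [hH g] at h2
  exact ⟨h2, hN'⟩
end

section
/- Let G be a finite group, H ≤ M ≤ G subgroups with ⟨H, H^g⟩ ∩ M = H for all g ∈ G. If H is a maximal subgroup of M and M is a maximal subgroup of G, then ⟨H^G⟩ ∩ M = H. -/
open Pointwise

private lemma mem_conj_smul' {G : Type*} [Group G] (H : Subgroup G) (g x : G) :
    x ∈ MulAut.conj g • H ↔ g⁻¹ * x * g ∈ H := by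
  rw [Subgroup.mem_pointwise_smul_iff_inv_smul_mem, ← map_inv, MulAut.smul_def,
    MulAut.conj_apply, inv_inv]

private lemma conj_pow_smul_le' {G : Type*} [Group G] {H : Subgroup G} {g : G}
    (h : MulAut.conj g • H ≤ H) : ∀ k : ℕ, MulAut.conj (g ^ k) • H ≤ H
  | 0 => by simp
  | (k+1) => by
      have h1 : MulAut.conj (g ^ (k+1)) • H = MulAut.conj (g ^ k) • MulAut.conj g • H := by
        rw [← mul_smul, ← map_mul, ← pow_succ]
      rw [h1]
      calc MulAut.conj (g ^ k) • MulAut.conj g • H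
          ≤ MulAut.conj (g ^ k) • H := Subgroup.pointwise_smul_le_pointwise_smul_iff.mpr h
        _ ≤ H := conj_pow_smul_le' h k

private lemma conj_smul_eq_of_le' {G : Type*} [Group G] [Finite G] {H : Subgroup G} {g : G}
    (h : MulAut.conj g • H ≤ H) : MulAut.conj g • H = H := by
  refine le_antisymm h ?_
  have hpos : 0 < orderOf g := (isOfFinOrder_of_finite g).orderOf_pos
  have h1 : MulAut.conj (g ^ orderOf g) • H = H := by
    rw [pow_orderOf_eq_one, map_one, one_smul]
  have h2 : g ^ orderOf g = g * g ^ (orderOf g - 1) := by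
    rw [← pow_succ']
    congr 1
    omega
  calc H = MulAut.conj (g ^ orderOf g) • H := h1.symm
    _ = MulAut.conj g • (MulAut.conj (g ^ (orderOf g - 1)) • H) := by
        rw [h2, map_mul, mul_smul]
    _ ≤ MulAut.conj g • H :=
        Subgroup.pointwise_smul_le_pointwise_smul_iff.mpr (conj_pow_smul_le' h _)

theorem stmt14 {G : Type*} [Group G] [Finite G] (H M : Subgroup G)
    (hHM : H ≤ M)
    (hclosed : ∀ g : G, (H ⊔ MulAut.conj g • H) ⊓ M = H)
    (hHmax : H < M ∧ ∀ K : Subgroup G, H < K → K ≤ M → K = M)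
    (hMmax : IsCoatom M) :
    Subgroup.normalClosure (H : Set G) ⊓ M = H := by
  classical
  by_cases hNM : Subgroup.normalClosure (H : Set G) ⊓ M = H
  · exact hNM
  exfalso
  set N := Subgroup.normalClosure (H : Set G) with hNdef
  have hHN : H ≤ N := Subgroup.le_normalClosure
  have hMN : M ≤ N := by
    have h1 : H ≤ N ⊓ M := le_inf hHN hHM
    have h2 : N ⊓ M = M := hHmax.2 _ (lt_of_le_of_ne h1 (Ne.symm hNM)) inf_le_right
    rw [← h2]; exact inf_le_left
  -- conjugates of elements of M preserve H
  have hsmul_le : ∀ g : G, g ∈ M → MulAut.conj g • H ≤ M := by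
    intro g hg x hx
    rw [mem_conj_smul'] at hx
    have hx2 : x = g * (g⁻¹ * x * g) * g⁻¹ := by group
    rw [hx2]
    exact M.mul_mem (M.mul_mem hg (hHM hx)) (M.inv_mem hg)
  have hconj_eq : ∀ g : G, MulAut.conj g • H ≤ M → MulAut.conj g • H = H := by
    intro g hle
    refine conj_smul_eq_of_le' ?_
    have h1 : MulAut.conj g • H ≤ (H ⊔ MulAut.conj g • H) ⊓ M := le_inf le_sup_right hle
    rw [hclosed g] at h1
    exact h1
  -- H is not normal in G
  have hHnotnormal : ¬ H.Normal := by
    intro hn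
    have h1 : N = H := Subgroup.normalClosure_eq_self H
    exact absurd (hMN.trans h1.le) (not_le_of_gt hHmax.1)
  -- normalizer of H is M
  have hnor : Subgroup.normalizer (H : Set G) = M := by
    have hMle : M ≤ Subgroup.normalizer (H : Set G) := by
      intro g hg
      rw [Subgroup.mem_normalizer_iff]
      intro x
      constructor
      · intro hx
        have h1 : g * x * g⁻¹ ∈ MulAut.conj g • H := by
          rw [mem_conj_smul']
          have : g⁻¹ * (g * x * g⁻¹) * g = x := by group
          rw [this]; exact hx
        rw [hconj_eq g (hsmul_le g hg)] at h1; exact h1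
      · intro hx
        have h2 : g * x * g⁻¹ ∈ MulAut.conj g • H := by
          rw [hconj_eq g (hsmul_le g hg)]; exact hx
        rw [mem_conj_smul'] at h2
        have h3 : g⁻¹ * (g * x * g⁻¹) * g = x := by group
        rw [h3] at h2; exact h2
    rcases lt_or_eq_of_le hMle with hlt | heq
    · exact absurd (Subgroup.normalizer_eq_top_iff.mp (hMmax.2 _ hlt)) hHnotnormal
    · exact heq.symm
  -- KEY: fixed point lemma
  have key : ∀ y mm : G, mm ∈ M → mm ∉ H → y⁻¹ * mm * y ∈ M → y ∈ M := by
    intro y mm hmmM hmmH hconjM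
    by_contra hyM
    have hy1 : ¬ (MulAut.conj y • H ≤ M) := by
      intro hle
      apply hyM
      rw [← hnor, Subgroup.mem_normalizer_iff]
      have heq := hconj_eq y hle
      intro x
      constructor
      · intro hx
        have h1 : y * x * y⁻¹ ∈ MulAut.conj y • H := by
          rw [mem_conj_smul']
          have : y⁻¹ * (y * x * y⁻¹) * y = x := by group
          rw [this]; exact hx
        rw [heq] at h1; exact h1
      · intro hx
        have h2 : y * x * y⁻¹ ∈ MulAut.conj y • H := by rw [heq]; exact hx
        rw [mem_conj_smul'] at h2
        have h3 : y⁻¹ * (y * x * y⁻¹) * y = x := by group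
        rw [h3] at h2; exact h2
    have hm2 : mm ∉ MulAut.conj y • H := by
      intro hmem
      apply hmmH
      have h1 : mm ∈ (H ⊔ MulAut.conj y • H) ⊓ M :=
        ⟨(le_sup_right : MulAut.conj y • H ≤ H ⊔ MulAut.conj y • H) hmem, hmmM⟩
      rw [hclosed y] at h1; exact h1
    set L := H ⊔ MulAut.conj y • H with hLdef
    have hc1 : MulAut.conj mm • H = H := hconj_eq mm (hsmul_le mm hmmM)
    have hc2 : MulAut.conj (y⁻¹ * mm * y) • H = H := hconj_eq _ (hsmul_le _ hconjM)
    have hc3 : MulAut.conj mm • (MulAut.conj y • H) = MulAut.conj y • H := by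
      rw [← mul_smul, ← map_mul]
      have h1 : mm * y = y * (y⁻¹ * mm * y) := by group
      rw [h1, map_mul, mul_smul, hc2]
    have hmL : MulAut.conj mm • L = L := by
      rw [hLdef, Subgroup.smul_sup, hc1, hc3]
    have hTM : H ⊔ Subgroup.zpowers mm = M := by
      apply hHmax.2
      · refine lt_of_le_of_ne le_sup_left ?_
        intro heq
        apply hmmH
        rw [heq]
        exact (le_sup_right : Subgroup.zpowers mm ≤ _) (Subgroup.mem_zpowers mm)
      · exact sup_le hHM (Subgroup.zpowers_le.mpr hmmM)
    have hE : L ⊔ Subgroup.zpowers mm = ⊤ := by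
      apply hMmax.2
      refine lt_of_le_of_ne ?_ ?_
      · rw [← hTM]
        exact sup_le_sup_right le_sup_left _
      · intro heq
        apply hy1
        calc MulAut.conj y • H ≤ L := le_sup_right
          _ ≤ L ⊔ Subgroup.zpowers mm := le_sup_left
          _ = M := heq.symm
    have hLnormal : L.Normal := by
      rw [← Subgroup.normalizer_eq_top_iff]
      rw [eq_top_iff, ← hE]
      refine sup_le Subgroup.le_normalizer (Subgroup.zpowers_le.mpr ?_)
      rw [Subgroup.mem_normalizer_iff]
      intro x
      constructor
      · intro hx
        have h1 : mm * x * mm⁻¹ ∈ MulAut.conj mm • L := by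
          rw [mem_conj_smul']
          have : mm⁻¹ * (mm * x * mm⁻¹) * mm = x := by group
          rw [this]; exact hx
        rw [hmL] at h1; exact h1
      · intro hx
        have h2 : mm * x * mm⁻¹ ∈ MulAut.conj mm • L := by rw [hmL]; exact hx
        rw [mem_conj_smul'] at h2
        have h3 : mm⁻¹ * (mm * x * mm⁻¹) * mm = x := by group
        rw [h3] at h2; exact h2
    haveI := hLnormal
    have hNL : N ≤ L := Subgroup.normalClosure_le_normal (fun x hx => (le_sup_left : H ≤ L) hx)
    have hML : M ≤ L := hMN.trans hNL
    have hMH : M = H := by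
      rw [← hclosed y]
      exact le_antisymm (le_inf hML le_rfl) inf_le_right
    exact absurd hMH.symm (ne_of_lt hHmax.1)
  -- now the transfer argument
  haveI hH'normal : (H.subgroupOf M).Normal := by
    constructor
    rintro ⟨n, hnM⟩ hn ⟨g, hgM⟩
    rw [Subgroup.mem_subgroupOf] at hn ⊢
    have h1 : g * n * g⁻¹ ∈ MulAut.conj g • H := by
      rw [mem_conj_smul']
      have : g⁻¹ * (g * n * g⁻¹) * g = n := by group
      rw [this]; exact hn
    rw [hconj_eq g (hsmul_le g hgM)] at h1
    exact h1
  obtain ⟨m₀, hm₀M, hm₀H⟩ : ∃ x, x ∈ M ∧ x ∉ H := SetLike.exists_of_lt hHmax.1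
  -- the quotient group
  have hm₀q : (QuotientGroup.mk' (H.subgroupOf M) ⟨m₀, hm₀M⟩ : ↥M ⧸ H.subgroupOf M) ≠ 1 := by
    rw [Ne, QuotientGroup.mk'_apply, QuotientGroup.eq_one_iff, Subgroup.mem_subgroupOf]
    exact hm₀H
  haveI : Nontrivial (↥M ⧸ H.subgroupOf M) := ⟨_, 1, hm₀q⟩
  -- subgroup dichotomy in the quotient
  have hdich : ∀ S : Subgroup (↥M ⧸ H.subgroupOf M), S = ⊥ ∨ S = ⊤ := by
    intro S
    set K : Subgroup ↥M := S.comap (QuotientGroup.mk' (H.subgroupOf M)) with hKdef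
    have hSK : K.map (QuotientGroup.mk' (H.subgroupOf M)) = S :=
      Subgroup.map_comap_eq_self_of_surjective (QuotientGroup.mk'_surjective _) S
    set KG : Subgroup G := K.map M.subtype with hKGdef
    have hHKG : H ≤ KG := by
      intro h hh
      have h1 : (QuotientGroup.mk' (H.subgroupOf M) ⟨h, hHM hh⟩ : ↥M ⧸ H.subgroupOf M) = 1 := by
        rw [QuotientGroup.mk'_apply, QuotientGroup.eq_one_iff, Subgroup.mem_subgroupOf]
        exact hh
      have h2 : (⟨h, hHM hh⟩ : ↥M) ∈ K := by
        rw [hKdef, Subgroup.mem_comap, h1]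
        exact S.one_mem
      exact ⟨⟨h, hHM hh⟩, h2, rfl⟩
    have hKGM : KG ≤ M := by
      rintro x ⟨⟨x', hx'M⟩, _, rfl⟩
      exact hx'M
    rcases eq_or_lt_of_le hHKG with heq | hlt
    · left
      have hK : K ≤ H.subgroupOf M := by
        intro k hk
        have h1 : (k : G) ∈ KG := ⟨k, hk, rfl⟩
        rw [← heq] at h1
        exact Subgroup.mem_subgroupOf.mpr h1
      rw [← hSK, eq_bot_iff]
      rintro s ⟨k, hk, rfl⟩
      have h2 : (QuotientGroup.mk' (H.subgroupOf M)) k = 1 := by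
        rw [QuotientGroup.mk'_apply, QuotientGroup.eq_one_iff]
        exact hK hk
      rw [h2]
      exact Subgroup.one_mem ⊥
    · right
      have hKGM2 : KG = M := hHmax.2 KG hlt hKGM
      have hK : K = ⊤ := by
        apply Subgroup.map_injective M.subtype_injective
        rw [← MonoidHom.range_eq_map, Subgroup.range_subtype]
        exact hKGM2
      rw [← hSK, hK]
      rw [← MonoidHom.range_eq_map, MonoidHom.range_eq_top]
      exact QuotientGroup.mk'_surjective _
  -- the quotient has prime order q
  set q := Nat.card (↥M ⧸ H.subgroupOf M) with hqdef
  have hq1 : 1 < q := Finite.one_lt_card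
  haveI hfact : Fact (q.minFac).Prime := ⟨Nat.minFac_prime (by omega)⟩
  obtain ⟨x, hx⟩ := exists_prime_orderOf_dvd_card' (G := ↥M ⧸ H.subgroupOf M) q.minFac
    (Nat.minFac_dvd q)
  have hzp : Subgroup.zpowers x = ⊤ := by
    rcases hdich (Subgroup.zpowers x) with h | h
    · exfalso
      have h1 : x ∈ Subgroup.zpowers x := Subgroup.mem_zpowers x
      rw [h] at h1
      rw [Subgroup.mem_bot] at h1
      rw [h1, orderOf_one] at hx
      exact absurd hx.symm (Nat.Prime.ne_one hfact.out)
    · exact h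
  have hqprime : q.Prime := by
    have h1 : q = q.minFac := by
      rw [← hx, ← Nat.card_zpowers, hzp, Subgroup.card_top]
    rw [h1]
    exact hfact.out
  haveI : Fact q.Prime := ⟨hqprime⟩
  haveI hcyc : IsCyclic (↥M ⧸ H.subgroupOf M) := isCyclic_of_prime_card (p := q) rfl
  letI : CommGroup (↥M ⧸ H.subgroupOf M) := IsCyclic.commGroup
  set φ : ↥M →* ↥M ⧸ H.subgroupOf M := QuotientGroup.mk' (H.subgroupOf M) with hφdef
  set V : G →* ↥M ⧸ H.subgroupOf M := MonoidHom.transfer φ with hVdef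
  -- V vanishes on H
  have hVH : ∀ h : G, h ∈ H → V h = 1 := by
    intro h hh
    letI : Fintype (Quotient (MulAction.orbitRel (Subgroup.zpowers h) (G ⧸ M))) :=
      Fintype.ofFinite _
    rw [hVdef, MonoidHom.transfer_eq_prod_quotient_orbitRel_zpowers_quot]
    apply Finset.prod_eq_one
    intro Q _
    rw [hφdef, QuotientGroup.mk'_apply, QuotientGroup.eq_one_iff, Subgroup.mem_subgroupOf]
    -- goal: the element is in H
    have hzH : Q.out.out⁻¹ * h ^ Function.minimalPeriod (h • ·) Q.out * Q.out.out
        ∈ MulAut.conj Q.out.out⁻¹ • H := by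
      rw [mem_conj_smul']
      have heq : (Q.out.out⁻¹)⁻¹ * (Q.out.out⁻¹ * h ^ Function.minimalPeriod (h • ·) Q.out
          * Q.out.out) * Q.out.out⁻¹ = h ^ Function.minimalPeriod (h • ·) Q.out := by
        group
      rw [heq]
      exact H.pow_mem hh _
    have hzM : Q.out.out⁻¹ * h ^ Function.minimalPeriod (h • ·) Q.out * Q.out.out ∈ M :=
      QuotientGroup.out_conj_pow_minimalPeriod_mem M h Q.out
    have h1 : Q.out.out⁻¹ * h ^ Function.minimalPeriod (h • ·) Q.out * Q.out.out
        ∈ (H ⊔ MulAut.conj Q.out.out⁻¹ • H) ⊓ M :=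
      ⟨(le_sup_right : MulAut.conj Q.out.out⁻¹ • H ≤ _) hzH, hzM⟩
    rw [hclosed Q.out.out⁻¹] at h1
    exact h1
  -- N is in the kernel of V
  have hNker : N ≤ V.ker := by
    apply Subgroup.normalClosure_le_normal
    intro h hh
    rw [SetLike.mem_coe, MonoidHom.mem_ker]
    exact hVH h hh
  -- construct the q-element m
  set n₀ := orderOf m₀ with hn₀def
  have hn₀pos : 0 < n₀ := (isOfFinOrder_of_finite m₀).orderOf_pos
  set b := n₀ / q ^ n₀.factorization q with hbdef
  set m := m₀ ^ b with hmdef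
  have hmM : m ∈ M := M.pow_mem hm₀M b
  have hbdvd : q ^ n₀.factorization q * b = n₀ := Nat.ordProj_mul_ordCompl_eq_self n₀ q
  -- order of image of m₀
  have hordy : orderOf (φ ⟨m₀, hm₀M⟩) = q := by
    have h1 : orderOf (φ ⟨m₀, hm₀M⟩) ∣ q := orderOf_dvd_natCard _
    rcases (Nat.dvd_prime hqprime).mp h1 with h | h
    · exfalso
      exact hm₀q (orderOf_eq_one_iff.mp h)
    · exact h
  have hqb : ¬ q ∣ b := Nat.not_dvd_ordCompl hqprime hn₀pos.ne'
  -- m is not in H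
  have hφm : φ ⟨m, hmM⟩ ≠ 1 := by
    have h1 : (⟨m, hmM⟩ : ↥M) = (⟨m₀, hm₀M⟩ : ↥M) ^ b := by
      ext
      simp [hmdef]
    rw [h1, map_pow]
    intro h2
    rw [← orderOf_dvd_iff_pow_eq_one, hordy] at h2
    exact hqb h2
  have hmH : m ∉ H := by
    intro hmem
    apply hφm
    rw [hφdef, QuotientGroup.mk'_apply, QuotientGroup.eq_one_iff, Subgroup.mem_subgroupOf]
    exact hmem
  -- order of m divides q ^ v
  have hmord : orderOf m ∣ q ^ n₀.factorization q := by
    rw [orderOf_dvd_iff_pow_eq_one, hmdef, ← pow_mul]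
    rw [mul_comm b _, hbdvd]
    exact pow_orderOf_eq_one m₀
  -- m ^ q ∈ H
  have hmqH : m ^ q ∈ H := by
    have h1 : (φ ⟨m, hmM⟩) ^ q = 1 := by
      exact pow_card_eq_one'
    rw [← map_pow] at h1
    rw [hφdef, QuotientGroup.mk'_apply, QuotientGroup.eq_one_iff, Subgroup.mem_subgroupOf] at h1
    exact h1
  -- V m = 1 since m ∈ M ≤ N ≤ ker V
  have hVm : V m = 1 := by
    have := hNker (hMN hmM)
    rwa [MonoidHom.mem_ker] at this
  -- evaluate V m and contradict
  letI : Fintype (Quotient (MulAction.orbitRel (Subgroup.zpowers m) (G ⧸ M))) :=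
    Fintype.ofFinite _
  rw [hVdef, MonoidHom.transfer_eq_prod_quotient_orbitRel_zpowers_quot] at hVm
  set Q₀ : Quotient (MulAction.orbitRel (Subgroup.zpowers m) (G ⧸ M)) :=
    Quotient.mk (MulAction.orbitRel (Subgroup.zpowers m) (G ⧸ M)) (QuotientGroup.mk (1 : G))
    with hQ₀def
  -- Q₀.out = mk 1
  have hQ₀out : Q₀.out = QuotientGroup.mk (1 : G) := by
    have h1 := Quotient.mk_out (s := MulAction.orbitRel (Subgroup.zpowers m) (G ⧸ M))
      (QuotientGroup.mk (1 : G))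
    rw [MulAction.orbitRel_apply] at h1
    obtain ⟨⟨z, hz⟩, hzeq⟩ := h1
    obtain ⟨k, hk⟩ := hz
    have hzM : z ∈ M := by rw [← hk]; exact M.zpow_mem hmM k
    have h2 : Q₀.out = QuotientGroup.mk z := by
      rw [← hzeq]
      show ((z : G)) • (QuotientGroup.mk (1 : G) : G ⧸ M) = _
      rw [MulAction.Quotient.smul_mk, smul_eq_mul, mul_one]
    rw [h2, QuotientGroup.eq]
    simpa using M.inv_mem hzM
  have hy₀M : Q₀.out.out ∈ M := by
    have h1 : (QuotientGroup.mk Q₀.out.out : G ⧸ M) = QuotientGroup.mk (1 : G) := by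
      rw [QuotientGroup.out_eq', hQ₀out]
    rw [QuotientGroup.eq] at h1
    simpa using M.inv_mem h1
  -- minimal period at Q₀.out is 1
  have hT₀ : Function.minimalPeriod (m • ·) Q₀.out = 1 := by
    have hfix : Function.IsPeriodicPt (m • ·) 1 Q₀.out := by
      show Function.IsFixedPt ((m • ·)^[1]) Q₀.out
      rw [Function.iterate_one]
      show m • Q₀.out = Q₀.out
      rw [hQ₀out, MulAction.Quotient.smul_mk, smul_eq_mul, mul_one, QuotientGroup.eq]
      simpa using M.inv_mem hmM
    exact Nat.dvd_one.mp hfix.minimalPeriod_dvd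
  -- all other factors are trivial
  have hothers : ∀ Q : Quotient (MulAction.orbitRel (Subgroup.zpowers m) (G ⧸ M)),
      Q ∈ Finset.univ → Q ≠ Q₀ →
      φ ⟨Q.out.out⁻¹ * m ^ Function.minimalPeriod (m • ·) Q.out * Q.out.out,
        QuotientGroup.out_conj_pow_minimalPeriod_mem M m Q.out⟩ = 1 := by
    intro Q _ hQne
    set T := Function.minimalPeriod (m • ·) Q.out with hTdef
    set y := Q.out.out with hydef
    have hmem : y⁻¹ * m ^ T * y ∈ M := QuotientGroup.out_conj_pow_minimalPeriod_mem M m Q.out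
    by_cases hT1 : T = 1
    · -- fixed coset: forces Q = Q₀, contradiction
      exfalso
      apply hQne
      have h1 : y⁻¹ * m * y ∈ M := by
        have := hmem
        rw [hT1, pow_one] at this
        exact this
      have hyM : y ∈ M := key y m hmM hmH h1
      have h2 : Q.out = QuotientGroup.mk (1 : G) := by
        rw [← QuotientGroup.out_eq' Q.out, QuotientGroup.eq]
        simpa using M.inv_mem hyM
      rw [← Quotient.out_eq Q, h2, hQ₀def]
    · -- non-fixed: m ^ T ∈ H
      have hTdvd : T ∣ orderOf m := by
        apply Function.IsPeriodicPt.minimalPeriod_dvd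
        show Function.IsFixedPt ((m • ·)^[orderOf m]) Q.out
        rw [smul_iterate, pow_orderOf_eq_one]
        show (1 : G) • Q.out = Q.out
        rw [one_smul]
      have hTq : q ∣ T := by
        obtain ⟨s, hsle, hTs⟩ := (Nat.dvd_prime_pow hqprime).mp (hTdvd.trans hmord)
        rcases Nat.eq_zero_or_pos s with hs0 | hspos
        · exfalso; apply hT1; rw [hTs, hs0, pow_zero]
        · rw [hTs]
          exact dvd_pow_self q hspos.ne'
      obtain ⟨t, ht⟩ := hTq
      have hmTH : m ^ T ∈ H := by
        rw [ht, pow_mul]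
        exact H.pow_mem hmqH t
      -- hence the factor is in H
      rw [hφdef, QuotientGroup.mk'_apply, QuotientGroup.eq_one_iff, Subgroup.mem_subgroupOf]
      have hzH : y⁻¹ * m ^ T * y ∈ MulAut.conj y⁻¹ • H := by
        rw [mem_conj_smul']
        have heq : (y⁻¹)⁻¹ * (y⁻¹ * m ^ T * y) * y⁻¹ = m ^ T := by group
        rw [heq]
        exact hmTH
      have h1 : y⁻¹ * m ^ T * y ∈ (H ⊔ MulAut.conj y⁻¹ • H) ⊓ M :=
        ⟨(le_sup_right : MulAut.conj y⁻¹ • H ≤ _) hzH, hmem⟩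
      rw [hclosed y⁻¹] at h1
      exact h1
  rw [Finset.prod_eq_single_of_mem Q₀ (Finset.mem_univ Q₀) hothers] at hVm
  -- the Q₀ factor equals φ ⟨m⟩ ≠ 1
  apply hφm
  have hsub : (⟨Q₀.out.out⁻¹ * m ^ Function.minimalPeriod (m • ·) Q₀.out * Q₀.out.out,
      QuotientGroup.out_conj_pow_minimalPeriod_mem M m Q₀.out⟩ : ↥M)
      = (⟨Q₀.out.out, hy₀M⟩ : ↥M)⁻¹ * ⟨m, hmM⟩ * ⟨Q₀.out.out, hy₀M⟩ := by
    ext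
    show Q₀.out.out⁻¹ * m ^ Function.minimalPeriod (m • ·) Q₀.out * Q₀.out.out
      = Q₀.out.out⁻¹ * m * Q₀.out.out
    rw [hT₀, pow_one]
  rw [hsub, map_mul, map_mul, map_inv] at hVm
  have hfinal : φ ⟨m, hmM⟩
      = (φ ⟨Q₀.out.out, hy₀M⟩)
        * ((φ ⟨Q₀.out.out, hy₀M⟩)⁻¹ * φ ⟨m, hmM⟩ * φ ⟨Q₀.out.out, hy₀M⟩)
        * (φ ⟨Q₀.out.out, hy₀M⟩)⁻¹ := by group
  rw [hVm, mul_one, mul_inv_cancel] at hfinal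
  exact hfinal
end

section
/- Let G be a finite nonabelian simple group, M a maximal subgroup of G, and H a normal subgroup of M of prime index in M. Then there exists g ∈ G such that G = ⟨H, H^g⟩. -/
open Pointwise MulAction Subgroup

namespace Stmt15

variable {G : Type*} [Group G]

/-- Conjugate of a subgroup: `cj g A = g A g⁻¹`. -/
def cj (g : G) (A : Subgroup G) : Subgroup G := MulAut.conj g • A

lemma mem_cj {g x : G} {A : Subgroup G} : x ∈ cj g A ↔ g⁻¹ * x * g ∈ A := by
  rw [cj, Subgroup.mem_pointwise_smul_iff_inv_smul_mem]
  simp [MulAut.smul_def]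

lemma cj_cj (a b : G) (A : Subgroup G) : cj a (cj b A) = cj (a * b) A := by
  rw [cj, cj, cj, smul_smul, ← map_mul]

@[simp] lemma cj_one (A : Subgroup G) : cj 1 A = A := by
  rw [cj, map_one, one_smul]

lemma cj_inv_cj (g : G) (A : Subgroup G) : cj g⁻¹ (cj g A) = A := by
  rw [cj_cj, inv_mul_cancel, cj_one]

lemma cj_cj_inv (g : G) (A : Subgroup G) : cj g (cj g⁻¹ A) = A := by
  rw [cj_cj, mul_inv_cancel, cj_one]

lemma cj_mono (g : G) {A B : Subgroup G} (h : A ≤ B) : cj g A ≤ cj g B := by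
  intro x hx
  rw [mem_cj] at hx ⊢
  exact h hx

lemma cj_inf (g : G) (A B : Subgroup G) : cj g (A ⊓ B) = cj g A ⊓ cj g B :=
  Subgroup.smul_inf _ _ _

lemma cj_sup (g : G) (A B : Subgroup G) : cj g (A ⊔ B) = cj g A ⊔ cj g B :=
  Subgroup.smul_sup _ _ _

lemma cj_card (g : G) (A : Subgroup G) : Nat.card (cj g A) = Nat.card A := by
  rw [cj, Subgroup.pointwise_smul_def]
  exact (Nat.card_congr (Subgroup.equivMapOfInjective A _ (MulAut.conj g).injective).toEquiv).symm

lemma cj_eq_of_mem_normalizer {g : G} {A : Subgroup G} (h : g ∈ (Subgroup.normalizer (A : Set _))) :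
    cj g A = A := by
  ext x
  rw [mem_cj]
  exact (Subgroup.mem_normalizer_iff''.mp h x).symm

lemma mem_normalizer_of_cj_eq {g : G} {A : Subgroup G} (h : cj g A = A) :
    g ∈ (Subgroup.normalizer (A : Set _)) := by
  rw [Subgroup.mem_normalizer_iff'']
  intro x
  rw [← mem_cj (g := g), h]

lemma eq_of_le_of_card_le' [Finite G] {A B : Subgroup G} (h : A ≤ B)
    (hc : Nat.card B ≤ Nat.card A) : A = B := by
  apply SetLike.coe_injective
  exact Set.eq_of_subset_of_ncard_le h
    (by rw [← Nat.card_coe_set_eq, ← Nat.card_coe_set_eq]; exact hc)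

lemma card_mul_relIndex' {A B : Subgroup G} (h : A ≤ B) :
    Nat.card A * A.relIndex B = Nat.card B := by
  have h2 := Subgroup.card_mul_index (A.subgroupOf B)
  rwa [Nat.card_congr (Subgroup.subgroupOfEquivOfLe h).toEquiv] at h2

lemma exists_notmem_two {P' A B : Subgroup G} (hA : ¬ P' ≤ A) (hB : ¬ P' ≤ B) :
    ∃ w, w ∈ P' ∧ w ∉ A ∧ w ∉ B := by
  obtain ⟨a, haP, haA⟩ := SetLike.not_le_iff_exists.mp hA
  obtain ⟨b, hbP, hbB⟩ := SetLike.not_le_iff_exists.mp hB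
  by_cases hab : a ∈ B
  · by_cases hba : b ∈ A
    · refine ⟨a * b, mul_mem haP hbP, fun h => haA ?_, fun h => hbB ?_⟩
      · simpa using mul_mem h (inv_mem hba)
      · simpa using mul_mem (inv_mem hab) h
    · exact ⟨b, hbP, hba, hbB⟩
  · exact ⟨a, haP, haA, hab⟩

lemma ppow_coprime_dvd {p r s n : ℕ} (hp : p.Prime) (hr : r ∣ p ^ n) (hrs : r ∣ s)
    (hs : ¬ p ∣ s) : r = 1 := by
  obtain ⟨j, hj, rfl⟩ := (Nat.dvd_prime_pow hp).mp hr
  cases j with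
  | zero => simp
  | succ k => exact absurd (dvd_trans (dvd_trans (dvd_pow_self p (Nat.succ_ne_zero k)) dvd_rfl) hrs) hs

lemma prime_of_mul_eq {p r s t n : ℕ} (hp : p.Prime) (hr : r ∣ p ^ n)
    (heq : r * s = t * p) (hs : ¬ p ∣ s) (ht : ¬ p ∣ t) : r = p := by
  obtain ⟨j, hj, rfl⟩ := (Nat.dvd_prime_pow hp).mp hr
  have hj1 : 1 ≤ j := by
    rcases Nat.eq_zero_or_pos j with h0 | h1
    · subst h0
      exact absurd ⟨t, by rw [mul_comm p t, ← heq, pow_zero, one_mul]⟩ hs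
    · exact h1
  have hj2 : j < 2 := by
    by_contra hge
    push_neg at hge
    have hpp : p * p ∣ p ^ j := by
      calc p * p = p ^ 2 := (sq p).symm
      _ ∣ p ^ j := pow_dvd_pow p hge
    obtain ⟨c, hc⟩ : p * p ∣ t * p := heq ▸ hpp.trans (Dvd.intro s rfl)
    have hteq : t * p = (p * c) * p := by rw [hc]; ring
    exact ht ⟨c, Nat.eq_of_mul_eq_mul_right hp.pos hteq⟩
  have : j = 1 := by omega
  subst this
  exact pow_one p


lemma cj_le_of_subgroupOf_normalizer {T B : Subgroup G} (hBT : B ≤ T)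
    {u : ↥T} (huN : u ∈ (Subgroup.normalizer ((B.subgroupOf T) : Set _))) : cj (↑u : G) B ≤ B := by
  intro z hz
  rw [mem_cj] at hz
  have hmem : (⟨(↑u)⁻¹ * z * ↑u, hBT hz⟩ : ↥T) ∈ B.subgroupOf T :=
    Subgroup.mem_subgroupOf.mpr hz
  have h2 := (Subgroup.mem_normalizer_iff.mp huN _).mp hmem
  have h3 := Subgroup.mem_subgroupOf.mp h2
  have h4 : (↑(u * (⟨(↑u)⁻¹ * z * ↑u, hBT hz⟩ : ↥T) * u⁻¹) : G) = z := by
    push_cast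
    group
  rwa [h4] at h3

lemma cj_eq_of_subgroupOf_normalizer {T B : Subgroup G} (hBT : B ≤ T)
    {u : ↥T} (huN : u ∈ (Subgroup.normalizer ((B.subgroupOf T) : Set _))) : cj (↑u : G) B = B := by
  apply le_antisymm (cj_le_of_subgroupOf_normalizer hBT huN)
  have h2 := cj_le_of_subgroupOf_normalizer hBT (inv_mem huN)
  have h2' : cj ((↑u : G))⁻¹ B ≤ B := by
    have hcoe : ((↑(u⁻¹) : G)) = ((↑u : G))⁻¹ := rfl
    rwa [hcoe] at h2
  have := cj_mono (↑u : G) h2'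
  rwa [cj_cj_inv] at this

lemma npp {p : ℕ} [Fact p.Prime] [Finite G] {P' P₀ : Subgroup G} (hpg : IsPGroup p ↥P')
    (hle : P₀ ≤ P') (hrel : P₀.relIndex P' = p) : ∀ x ∈ P', cj x P₀ = P₀ := by
  have hp : p.Prime := Fact.out
  have hA : (P₀.subgroupOf P').index = p := hrel
  have hnil : Group.IsNilpotent ↥P' := hpg.isNilpotent
  have hnc := normalizerCondition_of_isNilpotent (G := ↥P')
  have hAne : (P₀.subgroupOf P') ≠ ⊤ := by
    intro h
    rw [h, Subgroup.index_top] at hA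
    exact hp.ne_one hA.symm
  have hlt : (P₀.subgroupOf P') < (Subgroup.normalizer ((P₀.subgroupOf P') : Set ↥P')) :=
    hnc _ (lt_top_iff_ne_top.mpr hAne)
  have hNtop : (Subgroup.normalizer ((P₀.subgroupOf P') : Set ↥P')) = ⊤ := by
    have hchain := Subgroup.relIndex_mul_index (le_of_lt hlt)
    rw [hA] at hchain
    rcases hp.eq_one_or_self_of_dvd (Subgroup.normalizer ((P₀.subgroupOf P') : Set ↥P')).index
        ⟨_, by rw [← hchain, mul_comm]⟩ with h | h
    · rwa [Subgroup.index_eq_one] at h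
    · exfalso
      rw [h] at hchain
      have h2 : (P₀.subgroupOf P').relIndex (Subgroup.normalizer ((P₀.subgroupOf P') : Set ↥P')) = 1 :=
        Nat.eq_of_mul_eq_mul_right hp.pos (by rw [hchain, one_mul])
      have h3 := Subgroup.relIndex_eq_one.mp h2
      exact absurd (le_antisymm (le_of_lt hlt) h3) (ne_of_lt hlt)
  intro x hx
  exact cj_eq_of_subgroupOf_normalizer hle
    (u := ⟨x, hx⟩) (by rw [hNtop]; trivial)

instance instFiniteSubgroup [Finite G] : Finite (Subgroup G) :=

  Finite.of_injective (fun K => (K : Set G)) SetLike.coe_injective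

instance instFiniteSylow (p : ℕ) [Finite G] : Finite (Sylow p G) :=
  Finite.of_injective (fun P => ((P : Subgroup G) : Set G))
    (fun P Q h => Sylow.ext (SetLike.coe_injective h))

end Stmt15

open Stmt15 Pointwise MulAction Subgroup

theorem stmt15 {G : Type*} [Group G] [Finite G] [IsSimpleGroup G]
    (hnonab : ∃ a b : G, a * b ≠ b * a)
    (M H : Subgroup G) (hMmax : IsCoatom M) (hHM : H ≤ M)
    (hnorm : (H.subgroupOf M).Normal) (hprime : (H.relIndex M).Prime) :
    ∃ g : G, H ⊔ MulAut.conj g • H = ⊤ := by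
  classical
  set p := H.relIndex M with hp_def
  haveI hfp : Fact p.Prime := ⟨hprime⟩
  have hMne : M ≠ ⊤ := hMmax.1
  have hcoatom : ∀ K : Subgroup G, M ≤ K → K = M ∨ K = ⊤ := by
    intro K hK
    rcases eq_or_lt_of_le hK with h | h
    · exact Or.inl h.symm
    · exact Or.inr (hMmax.2 K h)
  have hpne1 : p ≠ 1 := hprime.ne_one
  have hbetween : ∀ K : Subgroup G, H ≤ K → K ≤ M → K = H ∨ K = M := by
    intro K h1 h2
    have hmul := Subgroup.relIndex_mul_relIndex H K M h1 h2
    rw [← hp_def] at hmul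
    rcases hprime.eq_one_or_self_of_dvd (H.relIndex K) ⟨K.relIndex M, hmul.symm⟩ with h | h
    · exact Or.inl (le_antisymm (Subgroup.relIndex_eq_one.mp h) h1)
    · right
      rw [h] at hmul
      have h3 : K.relIndex M = 1 :=
        Nat.eq_of_mul_eq_mul_left hprime.pos (by rw [hmul, mul_one])
      exact le_antisymm h2 (Subgroup.relIndex_eq_one.mp h3)
  have hconjkey : ∀ m' ∈ M, ∀ h ∈ H, m' * h * m'⁻¹ ∈ H := by
    intro m' hm' h hh
    have h2 := hnorm.conj_mem ⟨h, hHM hh⟩ (Subgroup.mem_subgroupOf.mpr hh) ⟨m', hm'⟩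
    exact Subgroup.mem_subgroupOf.mp h2
  have hconjM : ∀ m ∈ M, cj m H = H := by
    intro m hm
    apply le_antisymm
    · intro x hx
      rw [mem_cj] at hx
      have h2 := hconjkey m hm _ hx
      have h3 : m * (m⁻¹ * x * m) * m⁻¹ = x := by group
      rwa [h3] at h2
    · intro x hx
      rw [mem_cj]
      have h2 := hconjkey m⁻¹ (inv_mem hm) x hx
      have h3 : m⁻¹ * x * m⁻¹⁻¹ = m⁻¹ * x * m := by group
      rwa [h3] at h2
  have hMbot : M ≠ ⊥ := by
    intro h
    have hHb : H = ⊥ := le_bot_iff.mp (h ▸ hHM)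
    apply hpne1
    rw [hp_def, hHb, h, Subgroup.relIndex_bot_left]
    simp
  have hNM : (Subgroup.normalizer (M : Set _)) = M := by
    rcases hcoatom (Subgroup.normalizer (M : Set _)) Subgroup.le_normalizer with h | h
    · exact h
    · exfalso
      have hn : M.Normal := Subgroup.normalizer_eq_top_iff.mp h
      rcases IsSimpleGroup.eq_bot_or_eq_top_of_normal M hn with h' | h'
      exacts [hMbot h', hMne h']
  have hfixM : ∀ c : G, cj c M = M ↔ c ∈ M := by
    intro c
    constructor
    · intro h
      have := mem_normalizer_of_cj_eq h
      rwa [hNM] at this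
    · intro h
      exact cj_eq_of_mem_normalizer (by rw [hNM]; exact h)
  by_cases hHbot : H = ⊥
  · exfalso
    have hcard : Nat.card ↥M = p := by
      rw [hp_def, hHbot, Subgroup.relIndex_bot_left]
    have hMpg : IsPGroup p ↥M := IsPGroup.of_card (by rw [hcard, pow_one])
    obtain ⟨T, hMT⟩ := hMpg.exists_le_sylow
    have hTM : (T : Subgroup G) = M := by
      by_contra hne
      have hnil : Group.IsNilpotent ↥(T : Subgroup G) := T.2.isNilpotent
      have hnc := normalizerCondition_of_isNilpotent (G := ↥(T : Subgroup G))
      set A := M.subgroupOf (T : Subgroup G) with hA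
      have hAne : A ≠ ⊤ := by
        intro h
        exact hne (le_antisymm (Subgroup.subgroupOf_eq_top.mp h) hMT)
      obtain ⟨u, huN, huA⟩ := SetLike.exists_of_lt (hnc A (lt_top_iff_ne_top.mpr hAne))
      have hcju : cj (↑u : G) M = M := cj_eq_of_subgroupOf_normalizer hMT huN
      exact huA (Subgroup.mem_subgroupOf.mpr ((hfixM _).mp hcju))
    have hcyc : IsCyclic ↥M := isCyclic_of_prime_card hcard
    have hcomm : ∀ x y : ↥M, x * y = y * x := by
      obtain ⟨g, hg⟩ := hcyc.exists_generator
      intro x y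
      obtain ⟨i, hi⟩ := hg x
      obtain ⟨j, hj⟩ := hg y
      rw [← hi, ← hj, ← zpow_add, ← zpow_add, add_comm]
    have hcent : (Subgroup.normalizer ((T : Subgroup G) : Set _)) ≤ Subgroup.centralizer (T : Set G) := by
      intro m hm
      have hmM : m ∈ M := by
        rw [hTM] at hm
        rw [← hNM]
        exact hm
      rw [Subgroup.mem_centralizer_iff]
      intro y hy
      have hyM : y ∈ M := by rw [← hTM]; exact hy
      exact congrArg Subtype.val (hcomm ⟨y, hyM⟩ ⟨m, hmM⟩)
    have hker := MonoidHom.ker_transferSylow_isComplement' T hcent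
    rcases IsSimpleGroup.eq_bot_or_eq_top_of_normal _
        ((MonoidHom.transferSylow T hcent).normal_ker) with hk | hk
    · rw [hk] at hker
      have h3 : (T : Subgroup G) = ⊤ := Subgroup.isComplement'_bot_left.mp hker
      exact hMne (by rw [← hTM, h3])
    · rw [hk] at hker
      have h3 : (T : Subgroup G) = ⊥ := Subgroup.isComplement'_top_left.mp hker
      apply hpne1
      rw [← hcard, ← hTM, h3]
      exact Subgroup.card_bot
  · -- main case
    have hHtop : H ≠ ⊤ := fun h => hMne (top_le_iff.mp (h ▸ hHM))
    have hNH : (Subgroup.normalizer (H : Set _)) = M := by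
      have hle : M ≤ (Subgroup.normalizer (H : Set _)) := fun m hm => mem_normalizer_of_cj_eq (hconjM m hm)
      rcases hcoatom _ hle with h | h
      · exact h
      · exfalso
        have hn : H.Normal := Subgroup.normalizer_eq_top_iff.mp h
        rcases IsSimpleGroup.eq_bot_or_eq_top_of_normal H hn with h' | h'
        exacts [hHbot h', hHtop h']
    have hfixH : ∀ c : G, cj c H = H ↔ c ∈ M := by
      intro c
      constructor
      · intro h
        have := mem_normalizer_of_cj_eq h
        rwa [hNH] at this
      · intro h
        exact cj_eq_of_mem_normalizer (by rw [hNH]; exact h)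
    by_contra hcon
    push_neg at hcon
    have hdag : ∀ t, t ∈ M → t ∉ H → ∀ g : G, cj t (cj g H) = cj g H → cj g H ≤ M := by
      intro t htM htH g hnorm'
      by_contra hle
      apply hcon g
      show H ⊔ cj g H = ⊤
      set K := H ⊔ cj g H with hK
      have hHK : H ≤ K := le_sup_left
      have htK : t ∈ (Subgroup.normalizer (K : Set _)) := by
        apply mem_normalizer_of_cj_eq
        rw [hK, cj_sup, hconjM t htM, hnorm']
      have hMle : M ≤ (Subgroup.normalizer (K : Set _)) := by
        have hsub : H ⊔ Subgroup.zpowers t ≤ (Subgroup.normalizer (K : Set _)) :=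
          sup_le (le_trans hHK Subgroup.le_normalizer) (Subgroup.zpowers_le.mpr htK)
        rcases hbetween (H ⊔ Subgroup.zpowers t) le_sup_left
            (sup_le hHM (Subgroup.zpowers_le.mpr htM)) with h | h
        · exfalso
          apply htH
          have h2 : t ∈ H ⊔ Subgroup.zpowers t :=
            (le_sup_right : Subgroup.zpowers t ≤ _) (Subgroup.mem_zpowers t)
          rwa [h] at h2
        · rw [← h]; exact hsub
      rcases hcoatom _ hMle with h | h
      · exact (hle (le_trans le_sup_right (le_trans Subgroup.le_normalizer (le_of_eq h)))).elim
      · have hKn : K.Normal := Subgroup.normalizer_eq_top_iff.mp h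
        rcases IsSimpleGroup.eq_bot_or_eq_top_of_normal K hKn with h' | h'
        · exact absurd (le_bot_iff.mp (h' ▸ hHK)) hHbot
        · exact h'
    have hL8 : ∀ c x : G, x ∈ cj c M → cj x (cj c H) = cj c H := by
      intro c x hx
      rw [mem_cj] at hx
      have h1 : cj x (cj c H) = cj (x * c) H := cj_cj x c H
      have h2 : x * c = c * (c⁻¹ * x * c) := by group
      rw [h1, h2, ← cj_cj, hconjM _ hx]
    have hddag : ∀ a b w : G, w ∈ cj a M → w ∈ cj b M → w ∉ cj b H → cj a H ≤ cj b M := by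
      intro a b w hwa hwb hwbH
      have ht1 : b⁻¹ * w * b ∈ M := mem_cj.mp hwb
      have ht2 : b⁻¹ * w * b ∉ H := fun h => hwbH (mem_cj.mpr h)
      have ht3 : b⁻¹ * w * b ∈ cj (b⁻¹ * a) M := by
        rw [mem_cj]
        rw [mem_cj] at hwa
        have : (b⁻¹ * a)⁻¹ * (b⁻¹ * w * b) * (b⁻¹ * a) = a⁻¹ * w * a := by group
        rwa [this]
      have ht4 := hL8 (b⁻¹ * a) _ ht3
      have ht5 := hdag _ ht1 ht2 (b⁻¹ * a) ht4
      have ht6 := cj_mono b ht5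
      rwa [cj_cj, mul_inv_cancel_left] at ht6
    have hCL : ∀ a b w : G, w ∈ cj a M → w ∈ cj b M → w ∉ cj a H → w ∉ cj b H →
        cj a M = cj b M := by
      intro a b w hwa hwb hwaH hwbH
      by_contra hne
      have h1 : cj a H ≤ cj b M := hddag a b w hwa hwb hwbH
      have hXa : cj a M ⊓ cj b M ≤ cj a M := inf_le_left
      have hXH : cj a H ≤ cj a M ⊓ cj b M := le_inf (cj_mono a hHM) h1
      have hcase : cj a M ⊓ cj b M = cj a H ∨ cj a M ⊓ cj b M = cj a M := by
        have e1 : cj a⁻¹ (cj a M ⊓ cj b M) ≤ M := by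
          have := cj_mono a⁻¹ hXa
          rwa [cj_inv_cj] at this
        have e2 : H ≤ cj a⁻¹ (cj a M ⊓ cj b M) := by
          have := cj_mono a⁻¹ hXH
          rwa [cj_inv_cj] at this
        rcases hbetween _ e2 e1 with h | h
        · left
          have := congrArg (cj a) h
          rwa [cj_cj_inv] at this
        · right
          have := congrArg (cj a) h
          rwa [cj_cj_inv] at this
      rcases hcase with h | h
      · exact hwaH (h ▸ ⟨hwa, hwb⟩)
      · -- cj a M ≤ cj b M, both conjugates of coatom M
        have hle : cj a M ≤ cj b M := h ▸ inf_le_right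
        have hle2 : M ≤ cj (a⁻¹ * b) M := by
          have := cj_mono a⁻¹ hle
          rwa [cj_inv_cj, cj_cj] at this
        rcases hcoatom _ hle2 with h2 | h2
        · apply hne
          have := congrArg (cj a) h2.symm
          rwa [cj_cj, mul_inv_cancel_left] at this
        · -- cj (a⁻¹ b) M = ⊤ impossible: apply cj inverse to get M = ⊤
          apply hMne
          have := congrArg (cj (a⁻¹ * b)⁻¹) h2
          rw [cj_inv_cj] at this
          rw [this]
          ext x
          simp [mem_cj]
    by_cases hC2 : ∀ x : G, cj x H ≤ M → cj x H = H
    · exfalso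
      have hC2' : ∀ x : G, x ∉ M → M ⊓ cj x M ≤ cj x H := by
        intro x hxM el hel
        rw [Subgroup.mem_inf] at hel
        by_contra helH
        have h1 : cj (1 : G) H ≤ cj x M :=
          hddag 1 x el (by rw [cj_one]; exact hel.1) hel.2 helH
        rw [cj_one] at h1
        have h2 : cj x⁻¹ H ≤ M := by
          have h3 := cj_mono x⁻¹ h1
          rwa [cj_inv_cj] at h3
        have h4 : x⁻¹ ∈ M := (hfixH x⁻¹).mp (hC2 x⁻¹ h2)
        exact hxM (by simpa using inv_mem h4)
      obtain ⟨t₀, ht₀M, ht₀H⟩ : ∃ t, t ∈ M ∧ t ∉ H := by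
        have hnle : ¬ M ≤ H := fun h =>
          hpne1 (hp_def.trans (Subgroup.relIndex_eq_one.mpr h))
        obtain ⟨t, htM, htH⟩ := SetLike.not_le_iff_exists.mp hnle
        exact ⟨t, htM, htH⟩
      have hcoset : ∀ x : G, ((x : G ⧸ M) = ((1 : G) : G ⧸ M)) ↔ x ∈ M := by
        intro x
        rw [QuotientGroup.eq]
        simp
      have hcardA : Nat.card (↥M ⧸ H.subgroupOf M) = p := hp_def.symm
      haveI : IsCyclic (↥M ⧸ H.subgroupOf M) := isCyclic_of_prime_card hcardA
      letI : CommGroup (↥M ⧸ H.subgroupOf M) := IsCyclic.commGroup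
      let ϕ : ↥M →* (↥M ⧸ H.subgroupOf M) := QuotientGroup.mk' (H.subgroupOf M)
      haveI : Fintype (Quotient (orbitRel (Subgroup.zpowers t₀) (G ⧸ M))) :=
        Fintype.ofFinite _
      have heval := MonoidHom.transfer_eq_prod_quotient_orbitRel_zpowers_quot ϕ t₀
      set q₀ : Quotient (orbitRel (Subgroup.zpowers t₀) (G ⧸ M)) :=
        Quotient.mk (orbitRel (Subgroup.zpowers t₀) (G ⧸ M)) ((1 : G) : G ⧸ M) with hq₀
      have hout : ∀ q : Quotient (orbitRel (Subgroup.zpowers t₀) (G ⧸ M)),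
          q ≠ q₀ → (q.out.out : G) ∉ M := by
        intro q hq hxM
        apply hq
        have h1 : ((q.out.out : G) : G ⧸ M) = ((1 : G) : G ⧸ M) := (hcoset _).mpr hxM
        calc q = Quotient.mk _ q.out := (Quotient.out_eq q).symm
        _ = Quotient.mk _ ((q.out.out : G) : G ⧸ M) :=
          (congrArg (Quotient.mk _) (QuotientGroup.out_eq' q.out)).symm
        _ = q₀ := by rw [h1, hq₀]
      have hq₀out : q₀.out = ((1 : G) : G ⧸ M) := by
        have h1 : Quotient.mk (orbitRel (Subgroup.zpowers t₀) (G ⧸ M)) q₀.out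
            = Quotient.mk (orbitRel (Subgroup.zpowers t₀) (G ⧸ M)) ((1 : G) : G ⧸ M) := by
          rw [Quotient.out_eq q₀]
        obtain ⟨z, hz⟩ := Quotient.exact h1
        rw [← hz]
        have hzM : (↑z : G) ∈ M := Subgroup.zpowers_le.mpr ht₀M z.2
        show ((z : G) • (((1 : G)) : G ⧸ M)) = _
        rw [MulAction.Quotient.smul_mk]
        rw [hcoset]
        simpa using hzM
      have hfix : t₀ • (((1 : G)) : G ⧸ M) = (((1 : G)) : G ⧸ M) := by
        rw [MulAction.Quotient.smul_mk]
        rw [hcoset]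
        simpa using ht₀M
      have hk1 : Function.minimalPeriod (t₀ • ·) q₀.out = 1 := by
        rw [hq₀out]
        exact Function.minimalPeriod_eq_one_iff_isFixedPt.mpr hfix
      have hfactor : ∀ q : Quotient (orbitRel (Subgroup.zpowers t₀) (G ⧸ M)), q ≠ q₀ →
          ϕ ⟨q.out.out⁻¹ * t₀ ^ Function.minimalPeriod (t₀ • ·) q.out * q.out.out,
            QuotientGroup.out_conj_pow_minimalPeriod_mem M t₀ q.out⟩ = 1 := by
        intro q hq
        have hxM := hout q hq
        have hmem : q.out.out⁻¹ * t₀ ^ Function.minimalPeriod (t₀ • ·) q.out * q.out.out ∈ M :=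
          QuotientGroup.out_conj_pow_minimalPeriod_mem M t₀ q.out
        have h1 : t₀ ^ Function.minimalPeriod (t₀ • ·) q.out ∈ M ⊓ cj q.out.out M :=
          Subgroup.mem_inf.mpr ⟨pow_mem ht₀M _, mem_cj.mpr hmem⟩
        have h2 := hC2' _ hxM h1
        have h3 := mem_cj.mp h2
        show QuotientGroup.mk' (H.subgroupOf M) _ = 1
        rw [QuotientGroup.mk'_apply, QuotientGroup.eq_one_iff]
        exact Subgroup.mem_subgroupOf.mpr h3
      have hne1 : MonoidHom.transfer ϕ t₀ ≠ 1 := by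
        rw [heval, Fintype.prod_eq_single q₀ hfactor]
        intro h1
        have hx₀M : (q₀.out.out : G) ∈ M := by
          have h2 : ((q₀.out.out : G) : G ⧸ M) = ((1 : G) : G ⧸ M) :=
            (QuotientGroup.out_eq' q₀.out).trans hq₀out
          exact (hcoset _).mp h2
        rw [show (ϕ : ↥M →* (↥M ⧸ H.subgroupOf M)) = QuotientGroup.mk' (H.subgroupOf M) from rfl,
          QuotientGroup.mk'_apply, QuotientGroup.eq_one_iff] at h1
        have h2 : (Quotient.out q₀.out)⁻¹ * t₀ ^ Function.minimalPeriod
            (fun x => t₀ • x) q₀.out * Quotient.out q₀.out ∈ H :=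
          Subgroup.mem_subgroupOf.mp h1
        rw [hk1, pow_one] at h2
        have h3 : t₀ ∈ cj (q₀.out.out : G) H := mem_cj.mpr h2
        rw [hconjM _ hx₀M] at h3
        exact ht₀H h3
      rcases IsSimpleGroup.eq_bot_or_eq_top_of_normal _
          (MonoidHom.transfer ϕ).normal_ker with hk | hk
      · have hinj : Function.Injective (MonoidHom.transfer ϕ) :=
          (MonoidHom.ker_eq_bot_iff _).mp hk
        obtain ⟨a, b, hab⟩ := hnonab
        apply hab
        apply hinj
        rw [map_mul, map_mul, mul_comm]
      · apply hne1
        have : t₀ ∈ (MonoidHom.transfer ϕ).ker := by rw [hk]; trivial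
        exact this
    · exfalso
      push_neg at hC2
      obtain ⟨x₀, hx₀le, hx₀ne⟩ := hC2
      set y := x₀⁻¹ with hy
      have hHM₂ : H ≤ cj y M := by
        have h1 := cj_mono y hx₀le
        rwa [hy, cj_inv_cj] at h1
      have hM₂ne : cj y M ≠ M := by
        intro h
        have hyM : y ∈ M := (hfixM y).mp h
        have hx₀M : x₀ ∈ M := by
          rw [hy] at hyM
          simpa using inv_mem hyM
        exact hx₀ne ((hfixH x₀).mpr hx₀M)
      have hcardH0 : Nat.card ↥H ≠ 0 := Nat.card_pos.ne'
      have hcardM : Nat.card ↥H * p = Nat.card ↥M := by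
        rw [hp_def]
        exact card_mul_relIndex' hHM
      obtain ⟨Q₀⟩ : Nonempty (Sylow p ↥H) := inferInstance
      set P₀ : Subgroup G := (Q₀ : Subgroup ↥H).map H.subtype with hP₀def
      have hP₀H : P₀ ≤ H := Subgroup.map_subtype_le _
      have hP₀pg : IsPGroup p ↥P₀ := Q₀.2.map _
      have hP₀ind : ¬ p ∣ P₀.relIndex H := by
        have he : P₀.subgroupOf H = (Q₀ : Subgroup ↥H) :=
          Subgroup.comap_map_eq_self_of_injective H.subtype_injective _
        show ¬ p ∣ (P₀.subgroupOf H).index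
        rw [he]
        exact Q₀.not_dvd_index
      -- Sylow extension machine
      have hSyl : ∀ N : Subgroup G, H ≤ N → Nat.card ↥N = Nat.card ↥M →
          ∃ P' : Subgroup G, P₀ ≤ P' ∧ P' ≤ N ∧ IsPGroup p ↥P' ∧
            (¬ p ∣ P'.relIndex N) ∧ P₀.relIndex P' = p := by
        intro N hHN hcardN
        have hP₀N : P₀ ≤ N := hP₀H.trans hHN
        have hpgsub : IsPGroup p ↥(P₀.subgroupOf N) :=
          hP₀pg.of_equiv (Subgroup.subgroupOfEquivOfLe hP₀N).symm
        obtain ⟨SN, hSN⟩ := hpgsub.exists_le_sylow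
        set P' : Subgroup G := (SN : Subgroup ↥N).map N.subtype with hP'def
        have hP'N : P' ≤ N := Subgroup.map_subtype_le _
        have hP'pg : IsPGroup p ↥P' := SN.2.map _
        have hP₀P' : P₀ ≤ P' := by
          have h1 := Subgroup.map_mono (f := N.subtype) hSN
          rwa [Subgroup.subgroupOf_map_subtype, inf_of_le_left hP₀N] at h1
        have hP'ind : ¬ p ∣ P'.relIndex N := by
          have he : P'.subgroupOf N = (SN : Subgroup ↥N) :=
            Subgroup.comap_map_eq_self_of_injective N.subtype_injective _
          show ¬ p ∣ (P'.subgroupOf N).index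
          rw [he]
          exact SN.not_dvd_index
        refine ⟨P', hP₀P', hP'N, hP'pg, hP'ind, ?_⟩
        obtain ⟨n, hn⟩ := hP'pg.exists_card_eq
        have hrelHN : H.relIndex N = p := by
          have h1 := card_mul_relIndex' hHN
          rw [hcardN, ← hcardM] at h1
          exact Nat.eq_of_mul_eq_mul_left (Nat.pos_of_ne_zero hcardH0) h1
        have heq : P₀.relIndex P' * P'.relIndex N = P₀.relIndex H * p := by
          rw [Subgroup.relIndex_mul_relIndex P₀ P' N hP₀P' hP'N, ← hrelHN,
            Subgroup.relIndex_mul_relIndex P₀ H N hP₀H hHN]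
        have hdvd : P₀.relIndex P' ∣ p ^ n :=
          hn ▸ Subgroup.index_dvd_card (P₀.subgroupOf P')
        exact prime_of_mul_eq hprime hdvd heq hP'ind hP₀ind
      obtain ⟨P, hP₀P, hPM, hPpg, hPind, hPrel⟩ := hSyl M hHM rfl
      obtain ⟨P₁, hP₀P₁, hP₁M₂, hP₁pg, hP₁ind, hP₁rel⟩ := hSyl (cj y M) hHM₂ (cj_card y M)
      have hPW : ∀ x ∈ P, cj x P₀ = P₀ := npp hPpg hP₀P hPrel
      have hP₁W : ∀ x ∈ P₁, cj x P₀ = P₀ := npp hP₁pg hP₀P₁ hP₁rel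
      have hPleW : P ≤ (Subgroup.normalizer (P₀ : Set G)) := fun x hx => mem_normalizer_of_cj_eq (hPW x hx)
      have hP₁leW : P₁ ≤ (Subgroup.normalizer (P₀ : Set G)) := fun x hx => mem_normalizer_of_cj_eq (hP₁W x hx)
      -- P is a Sylow subgroup of G
      obtain ⟨T, hPT⟩ := hPpg.exists_le_sylow
      have hPnH : ¬ P ≤ H := by
        intro h
        apply hPind
        have h1 := Subgroup.relIndex_mul_relIndex P H M h hHM
        exact ⟨P.relIndex H, by rw [← h1, ← hp_def, mul_comm]⟩
      have hTP : (T : Subgroup G) = P := by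
        by_contra hne
        have hAne : P.subgroupOf (T : Subgroup G) ≠ ⊤ := fun h =>
          hne (le_antisymm (Subgroup.subgroupOf_eq_top.mp h) hPT)
        have hnil : Group.IsNilpotent ↥(T : Subgroup G) := T.2.isNilpotent
        have hnc := normalizerCondition_of_isNilpotent (G := ↥(T : Subgroup G))
        obtain ⟨u, huN, huA⟩ := SetLike.exists_of_lt
          (hnc (P.subgroupOf (T : Subgroup G)) (lt_top_iff_ne_top.mpr hAne))
        have hucj : cj (↑u : G) P = P := cj_eq_of_subgroupOf_normalizer hPT huN
        have huM : (↑u : G) ∉ M := by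
          intro huM'
          have hPB : P ≤ (T : Subgroup G) ⊓ M := le_inf hPT hPM
          have hBpg : IsPGroup p ↥((T : Subgroup G) ⊓ M) := T.2.to_inf_left
          obtain ⟨n, hn⟩ := hBpg.exists_card_eq
          have h1 : P.relIndex ((T : Subgroup G) ⊓ M) ∣ p ^ n :=
            hn ▸ Subgroup.index_dvd_card _
          have h2 : P.relIndex ((T : Subgroup G) ⊓ M) ∣ P.relIndex M :=
            ⟨_, (Subgroup.relIndex_mul_relIndex P ((T : Subgroup G) ⊓ M) M hPB
              inf_le_right).symm⟩
          have h4 : (T : Subgroup G) ⊓ M ≤ P :=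
            Subgroup.relIndex_eq_one.mp (ppow_coprime_dvd hprime h1 h2 hPind)
          exact huA (Subgroup.mem_subgroupOf.mpr (h4 (Subgroup.mem_inf.mpr ⟨u.2, huM'⟩)))
        have hPnuH : ¬ P ≤ cj (↑u : G) H := by
          intro h
          apply hPnH
          have h2 := cj_mono ((↑u : G))⁻¹ h
          rw [cj_inv_cj] at h2
          have h3 : cj ((↑u : G))⁻¹ P = P := by
            have h4 := congrArg (cj ((↑u : G))⁻¹) hucj
            rw [cj_inv_cj] at h4
            exact h4.symm
          rwa [h3] at h2
        obtain ⟨w, hwP, hwH, hwuH⟩ := exists_notmem_two hPnH hPnuH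
        have hw2 : w ∈ cj (↑u : G) M := by
          have h5 : w ∈ cj (↑u : G) P := by rw [hucj]; exact hwP
          exact cj_mono _ hPM h5
        have h6 := hCL 1 (↑u : G) w (by rw [cj_one]; exact hPM hwP) hw2
          (by rw [cj_one]; exact hwH) hwuH
        rw [cj_one] at h6
        exact huM ((hfixM _).mp h6.symm)
      -- P₁ is also a Sylow subgroup of G
      obtain ⟨T₁, hPT₁⟩ := hP₁pg.exists_le_sylow
      have hcardPP₁ : Nat.card ↥P₁ = Nat.card ↥P := by
        have h1 := card_mul_relIndex' hP₀P
        have h2 := card_mul_relIndex' hP₀P₁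
        rw [hPrel] at h1
        rw [hP₁rel] at h2
        rw [← h1, ← h2]
      have hT₁P₁ : (T₁ : Subgroup G) = P₁ := by
        refine (eq_of_le_of_card_le' hPT₁ ?_).symm
        have hc : Nat.card ↥(T₁ : Subgroup G) = Nat.card ↥P₁ := by
          calc Nat.card ↥(T₁ : Subgroup G) = Nat.card ↥(T : Subgroup G) := by
                rw [Sylow.card_eq_multiplicity, Sylow.card_eq_multiplicity]
          _ = Nat.card ↥P := by rw [hTP]
          _ = Nat.card ↥P₁ := hcardPP₁.symm
        exact le_of_eq hc
      -- conjugate P to P₁ inside the normalizer of P₀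
      have hTW : (T : Subgroup G) ≤ (Subgroup.normalizer (P₀ : Set G)) := by rw [hTP]; exact hPleW
      have hT₁W : (T₁ : Subgroup G) ≤ (Subgroup.normalizer (P₀ : Set G)) := by rw [hT₁P₁]; exact hP₁leW
      obtain ⟨σ, hσ⟩ := MulAction.exists_smul_eq (↥(Subgroup.normalizer (P₀ : Set G)))
        (T.subtype hTW) (T₁.subtype hT₁W)
      have hσT : ((↑σ : G) • T : Sylow p G) = T₁ := by
        apply Sylow.subtype_injective (N := (Subgroup.normalizer (P₀ : Set G)))
          (hP := Sylow.smul_le hTW σ) (hQ := hT₁W)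
        rw [← Sylow.smul_subtype hTW σ]
        exact hσ
      have hσP : cj (↑σ : G) P = P₁ := by
        rw [← hTP, ← hT₁P₁, ← hσT]
        rfl
      have hσP₀ : cj (↑σ : G) P₀ = P₀ := cj_eq_of_mem_normalizer σ.2
      -- H ⊓ P = P₀
      have hHP : H ⊓ P = P₀ := by
        refine le_antisymm ?_ (le_inf hP₀H hP₀P)
        have h1 : P₀ ≤ H ⊓ P := le_inf hP₀H hP₀P
        have hipg : IsPGroup p ↥(H ⊓ P) := hPpg.to_inf_right
        obtain ⟨n, hn⟩ := hipg.exists_card_eq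
        have h2 : P₀.relIndex (H ⊓ P) ∣ p ^ n := hn ▸ Subgroup.index_dvd_card _
        have h3 : P₀.relIndex (H ⊓ P) ∣ P₀.relIndex H :=
          ⟨_, (Subgroup.relIndex_mul_relIndex P₀ (H ⊓ P) H h1 inf_le_left).symm⟩
        exact Subgroup.relIndex_eq_one.mp (ppow_coprime_dvd hprime h2 h3 hP₀ind)
      -- relIndex of cj y H in cj y M
      have hrelH₂ : (cj y H).relIndex (cj y M) = p := by
        have h1 := card_mul_relIndex' (cj_mono y hHM)
        rw [cj_card, cj_card, ← hcardM] at h1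
        exact Nat.eq_of_mul_eq_mul_left (Nat.pos_of_ne_zero hcardH0) h1
      -- choose w in P₁ outside P₀ and cj y H
      have hP₁nP₀ : ¬ P₁ ≤ P₀ := by
        intro h
        rw [Subgroup.relIndex_eq_one.mpr h] at hP₁rel
        exact hpne1 hP₁rel.symm
      have hP₁nH₂ : ¬ P₁ ≤ cj y H := by
        intro h
        apply hP₁ind
        have hchain := Subgroup.relIndex_mul_relIndex P₁ (cj y H) (cj y M) h (cj_mono y hHM)
        exact ⟨_, by rw [← hchain, hrelH₂, mul_comm]⟩
      obtain ⟨w, hwP₁, hwP₀, hwH₂⟩ := exists_notmem_two hP₁nP₀ hP₁nH₂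
      have hw1 : w ∈ cj y M := hP₁M₂ hwP₁
      have hw2 : w ∈ cj (↑σ : G) M := by
        have hwp : w ∈ cj (↑σ : G) P := by rw [hσP]; exact hwP₁
        exact cj_mono _ hPM hwp
      have hw3 : w ∉ cj (↑σ : G) H := by
        intro h
        apply hwP₀
        have h1 : w ∈ cj (↑σ : G) H ⊓ cj (↑σ : G) P := by
          refine Subgroup.mem_inf.mpr ⟨h, ?_⟩
          rw [hσP]
          exact hwP₁
        rw [← cj_inf, hHP, hσP₀] at h1
        exact h1
      have hMM := hCL (↑σ : G) y w hw2 hw1 hw3 hwH₂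
      have hm : y⁻¹ * (↑σ : G) ∈ M := by
        apply (hfixM _).mp
        calc cj (y⁻¹ * (↑σ : G)) M = cj y⁻¹ (cj (↑σ : G) M) := (cj_cj _ _ _).symm
        _ = cj y⁻¹ (cj y M) := by rw [hMM]
        _ = M := cj_inv_cj y M
      have hσH : cj (↑σ : G) H = cj y H := by
        have h1 : (↑σ : G) = y * (y⁻¹ * (↑σ : G)) := by group
        rw [h1, ← cj_cj, hconjM _ hm]
      have hP₀H₂ : P₀ ≤ cj y H := by
        have h1 : cj (↑σ : G) P₀ ≤ cj (↑σ : G) H := cj_mono _ hP₀H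
        rwa [hσP₀, hσH] at h1
      -- H ⊔ cj y H = cj y M
      have hsup : H ⊔ cj y H = cj y M := by
        have hXle : H ⊔ cj y H ≤ cj y M := sup_le hHM₂ (cj_mono y hHM)
        have h1 : H ≤ cj y⁻¹ (H ⊔ cj y H) := by
          have h2 := cj_mono y⁻¹ (le_sup_right : cj y H ≤ H ⊔ cj y H)
          rwa [cj_inv_cj] at h2
        have h2 : cj y⁻¹ (H ⊔ cj y H) ≤ M := by
          have h3 := cj_mono y⁻¹ hXle
          rwa [cj_inv_cj] at h3
        rcases hbetween _ h1 h2 with h | h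
        · exfalso
          have h3 : H ⊔ cj y H = cj y H := by
            have h4 := congrArg (cj y) h
            rwa [cj_cj_inv] at h4
          have h4 : H ≤ cj y H := h3 ▸ le_sup_left
          have h5 : H = cj y H := eq_of_le_of_card_le' h4 (le_of_eq (cj_card y H))
          apply hM₂ne
          exact (hfixM y).mpr ((hfixH y).mp h5.symm)
        · have h3 := congrArg (cj y) h
          rwa [cj_cj_inv] at h3
      -- quotient argument in cj y M
      have hH₂N : cj y H ≤ cj y M := cj_mono y hHM
      haveI hH₂nrm : ((cj y H).subgroupOf (cj y M)).Normal := by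
        constructor
        intro n hn b
        rw [Subgroup.mem_subgroupOf] at hn ⊢
        have hb := hL8 y (↑b : G) b.2
        rw [← hb, mem_cj]
        have hcoe : ((↑b : G))⁻¹ * (↑(b * n * b⁻¹) : G) * (↑b : G) = (↑n : G) := by
          push_cast
          group
        rw [hcoe]
        exact hn
      have hcardQ : Nat.card (↥(cj y M) ⧸ (cj y H).subgroupOf (cj y M)) = p := hrelH₂
      have himg : ((H.subgroupOf (cj y M)).map
          (QuotientGroup.mk' ((cj y H).subgroupOf (cj y M)))) = ⊤ := by
        have h1 : Subgroup.comap (QuotientGroup.mk' ((cj y H).subgroupOf (cj y M)))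
            ((H.subgroupOf (cj y M)).map
              (QuotientGroup.mk' ((cj y H).subgroupOf (cj y M))))
            = H.subgroupOf (cj y M) ⊔ (cj y H).subgroupOf (cj y M) := by
          rw [Subgroup.comap_map_eq, QuotientGroup.ker_mk']
        have h2 : H.subgroupOf (cj y M) ⊔ (cj y H).subgroupOf (cj y M) = ⊤ := by
          apply Subgroup.map_injective (cj y M).subtype_injective
          rw [Subgroup.map_sup, Subgroup.subgroupOf_map_subtype,
            Subgroup.subgroupOf_map_subtype, inf_of_le_left hHM₂, inf_of_le_left hH₂N,
            hsup, ← MonoidHom.range_eq_map, Subgroup.range_subtype]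
        rw [h2] at h1
        have h3 := Subgroup.map_comap_eq_self_of_surjective
          (QuotientGroup.mk'_surjective ((cj y H).subgroupOf (cj y M)))
          ((H.subgroupOf (cj y M)).map
            (QuotientGroup.mk' ((cj y H).subgroupOf (cj y M))))
        rw [h1] at h3
        rw [← h3]
        exact Subgroup.map_top_of_surjective _
          (QuotientGroup.mk'_surjective ((cj y H).subgroupOf (cj y M)))
      have h4 : ((cj y H).subgroupOf (cj y M)).relIndex (H.subgroupOf (cj y M)) = p := by
        have h5 := Subgroup.relIndex_ker (K := H.subgroupOf (cj y M))
          (QuotientGroup.mk' ((cj y H).subgroupOf (cj y M)))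
        rw [QuotientGroup.ker_mk'] at h5
        rw [h5, himg, Subgroup.card_top]
        exact hcardQ
      have hP₀D : P₀.subgroupOf (cj y M) ≤
          ((cj y H).subgroupOf (cj y M)) ⊓ (H.subgroupOf (cj y M)) := by
        refine le_inf ?_ ?_ <;> intro z hz <;> rw [Subgroup.mem_subgroupOf] at hz ⊢
        · exact hP₀H₂ hz
        · exact hP₀H hz
      have hchain2 : (((cj y H).subgroupOf (cj y M)) ⊓
          (H.subgroupOf (cj y M))).relIndex (H.subgroupOf (cj y M)) = p := by
        rw [Subgroup.inf_relIndex_right]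
        exact h4
      have hdvd : p ∣ (P₀.subgroupOf (cj y M)).relIndex (H.subgroupOf (cj y M)) := by
        have h6 := Subgroup.relIndex_mul_relIndex (P₀.subgroupOf (cj y M))
          (((cj y H).subgroupOf (cj y M)) ⊓ (H.subgroupOf (cj y M)))
          (H.subgroupOf (cj y M)) hP₀D inf_le_right
        rw [hchain2] at h6
        exact ⟨_, by rw [← h6, mul_comm]⟩
      rw [Subgroup.relIndex_subgroupOf hHM₂] at hdvd
      exact hP₀ind hdvd
end

section
/- Let H ≤ M ≤ G be finite groups with H normal in M. Then M ∩ M^g ≤ H for all g ∈ G − M if and only if N_G(D) ≤ M for every subgroup D ≤ M with D not contained in H. -/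
open Pointwise

private theorem conjSmulMem {G : Type*} [Group G] (M : Subgroup G) (g : G) (x : G) :
    x ∈ MulAut.conj g • M ↔ g⁻¹ * x * g ∈ M := by
  rw [Subgroup.mem_pointwise_smul_iff_inv_smul_mem, ← MulAut.conj_inv_apply]
  rfl

private theorem cardConjSmul {G : Type*} [Group G] (M : Subgroup G) (g : G) :
    Nat.card (MulAut.conj g • M : Subgroup G) = Nat.card M := by
  rw [Subgroup.pointwise_smul_def]
  exact (Nat.card_congr (M.equivMapOfInjective _ (MulEquiv.injective _)).toEquiv).symm

private theorem cardLtOfLt {G : Type*} [Group G] {D E : Subgroup G} (h : D < E) [Finite G] :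
    Nat.card D < Nat.card E := by
  rw [← SetLike.coe_ssubset_coe] at h
  have := Set.ncard_lt_ncard h (Set.toFinite _)
  rwa [← Nat.card_coe_set_eq, ← Nat.card_coe_set_eq] at this

private theorem memNormOfConjEq {G : Type*} [Group G] {c : G} {D : Subgroup G}
    (h : MulAut.conj c • D = D) : c ∈ Subgroup.normalizer (D : Set G) := by
  rw [Subgroup.mem_normalizer_iff]
  intro x
  constructor
  · intro hx
    have := Subgroup.smul_mem_pointwise_smul x (MulAut.conj c) D hx
    rwa [h] at this
  · intro hx
    have h2 : (MulAut.conj c)⁻¹ • D = D := by rw [inv_smul_eq_iff, h]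
    have h3 := Subgroup.smul_mem_pointwise_smul _ (MulAut.conj c)⁻¹ D hx
    rw [h2] at h3
    have hx' : x = (MulAut.conj c)⁻¹ • (c * x * c⁻¹) := by
      rw [MulAut.smul_def, MulAut.conj_inv_apply]; group
    rw [hx']
    exact h3

private theorem grow {G : Type*} [Group G] [Finite G] {p : ℕ} [Fact p.Prime] {D E : Subgroup G}
    (hE : IsPGroup p E) (hlt : D < E) :
    ∃ F : Subgroup G, D < F ∧ F ≤ E ∧ F ≤ Subgroup.normalizer (D : Set G) := by
  haveI : Group.IsNilpotent ↥E := hE.isNilpotent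
  have hnc := normalizerCondition_of_isNilpotent (G := ↥E)
  have hDE : D ≤ E := hlt.le
  have h1 : D.subgroupOf E < ⊤ := by
    rw [lt_top_iff_ne_top]
    intro htop
    rw [Subgroup.subgroupOf_eq_top] at htop
    exact hlt.not_ge htop
  have h2 := hnc _ h1
  have hmapD : Subgroup.map E.subtype (D.subgroupOf E) = D := by
    rw [Subgroup.subgroupOf_map_subtype, inf_eq_left.mpr hDE]
  refine ⟨Subgroup.map E.subtype (Subgroup.normalizer ((D.subgroupOf E : Subgroup ↥E) : Set ↥E)), ?_, ?_, ?_⟩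
  · conv_lhs => rw [← hmapD]
    rw [lt_iff_le_and_ne]
    refine ⟨Subgroup.map_mono h2.le, fun he => h2.ne ?_⟩
    exact Subgroup.map_injective E.subtype_injective he
  · exact Subgroup.map_subtype_le _
  · rintro x ⟨t, ht, rfl⟩
    rw [Subgroup.mem_normalizer_iff]
    intro h
    have hmem := Subgroup.mem_normalizer_iff.mp ht
    constructor
    · intro hh
      exact (hmem ⟨h, hDE hh⟩).mp hh
    · intro hh
      have hhE : h ∈ E := by
        have h4 : ((t : G) * h * (t : G)⁻¹) ∈ E := hDE hh
        have := mul_mem (mul_mem (inv_mem t.2) h4) t.2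
        simpa [mul_assoc] using this
      exact (hmem ⟨h, hhE⟩).mpr hh

private theorem extract {G : Type*} [Group G] [Finite G] {K H : Subgroup G} :
    ∀ n : ℕ, ∀ x : G, orderOf x = n → x ∈ K → x ∉ H →
    ∃ (p : ℕ), p.Prime ∧ ∃ y : G, y ∈ K ∧ y ∉ H ∧ IsPGroup p (Subgroup.zpowers y) := by
  intro n
  induction n using Nat.strong_induction_on with
  | _ n ih =>
    intro x hord hxK hxH
    have hn0 : n ≠ 0 := by
      rw [← hord]; exact (orderOf_pos x).ne'
    by_cases hpp : IsPrimePow n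
    · obtain ⟨p, k, hp, hk, hpk⟩ := hpp
      refine ⟨p, hp.nat_prime, x, hxK, hxH, ?_⟩
      haveI : Fact p.Prime := ⟨hp.nat_prime⟩
      exact IsPGroup.of_card (by rw [Nat.card_zpowers, hord, ← hpk])
    · have hn1 : n ≠ 1 := by
        intro h
        rw [h] at hord
        exact hxH (by rw [orderOf_eq_one_iff.mp hord]; exact one_mem H)
      have h2 : 2 ≤ n := by omega
      set p := n.minFac with hpdef
      have hp : p.Prime := Nat.minFac_prime hn1
      set a := p ^ n.factorization p with hadef
      have hfpos : 0 < n.factorization p :=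
        (Nat.Prime.factorization_pos_of_dvd hp hn0 (Nat.minFac_dvd n))
      have ha1 : 1 < a := Nat.one_lt_pow hfpos.ne' hp.one_lt
      obtain ⟨b, hab⟩ : a ∣ n := Nat.ordProj_dvd n p
      have hbeq : n / a = b := by rw [hab]; exact Nat.mul_div_cancel_left _ (by omega)
      have hcop : Nat.Coprime a b := by
        have := Nat.Coprime.pow_left (n.factorization p) (Nat.coprime_ordCompl hp hn0)
        rwa [← hadef, hbeq] at this
      have hb1 : 1 < b := by
        have hb0 : b ≠ 0 := by intro h0; rw [h0, mul_zero] at hab; omega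
        rcases Nat.lt_or_ge b 2 with h | h
        · have hbone : b = 1 := by omega
          rw [hbone, mul_one] at hab
          exact absurd ⟨p, n.factorization p, hp.prime, hfpos, hab.symm⟩ hpp
        · omega
      have hcopZ : IsCoprime (a : ℤ) (b : ℤ) := by
        rw [Int.isCoprime_iff_gcd_eq_one]
        exact_mod_cast hcop
      obtain ⟨u, v, huv⟩ := hcopZ
      set y := x ^ (u * a) with hydef
      set z := x ^ (v * b) with hzdef
      have hxyz : x = y * z := by
        rw [hydef, hzdef, ← zpow_add, huv, zpow_one]
      have hxn : x ^ (n : ℤ) = 1 := by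
        rw [zpow_natCast, ← hord, pow_orderOf_eq_one]
      have hyb : y ^ (b : ℕ) = 1 := by
        rw [hydef, ← zpow_natCast, ← zpow_mul]
        have : u * ↑a * ↑b = ↑n * u := by
          push_cast [hab]; ring
        rw [this, zpow_mul, hxn, one_zpow]
      have hza : z ^ (a : ℕ) = 1 := by
        rw [hzdef, ← zpow_natCast, ← zpow_mul]
        have : v * ↑b * ↑a = ↑n * v := by
          push_cast [hab]; ring
        rw [this, zpow_mul, hxn, one_zpow]
      have hordy : orderOf y ≤ b := Nat.le_of_dvd (by omega) (orderOf_dvd_of_pow_eq_one hyb)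
      have hordz : orderOf z ≤ a := Nat.le_of_dvd (by omega) (orderOf_dvd_of_pow_eq_one hza)
      have hblt : b < n := by nlinarith
      have halt : a < n := by nlinarith
      have hyK : y ∈ K := zpow_mem hxK _
      have hzK : z ∈ K := zpow_mem hxK _
      by_cases hyH : y ∈ H
      · have hzH : z ∉ H := by
          intro hz
          exact hxH (hxyz ▸ mul_mem hyH hz)
        exact ih (orderOf z) (by omega) z rfl hzK hzH
      · exact ih (orderOf y) (by omega) y rfl hyK hyH

private theorem mapSmul {G : Type*} [Group G] (M : Subgroup G) (m : ↥M) (Q : Subgroup ↥M) :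
    Subgroup.map M.subtype (MulAut.conj m • Q) = MulAut.conj (m : G) • Subgroup.map M.subtype Q := by
  ext x
  simp only [Subgroup.mem_pointwise_smul_iff_inv_smul_mem, Subgroup.mem_map,
    MulAut.smul_def, MulAut.conj_inv_apply, Subgroup.coe_subtype]
  constructor
  · rintro ⟨q, hq, rfl⟩
    exact ⟨m⁻¹ * q * m, by simpa [mul_assoc] using hq, by push_cast; group⟩
  · rintro ⟨q, hq, hx⟩
    refine ⟨m * q * m⁻¹, by simpa [mul_assoc] using hq, ?_⟩
    push_cast
    rw [hx]
    group

theorem stmt18 {G : Type*} [Group G] [Finite G] (H M : Subgroup G)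
    (hHM : H ≤ M) (hnorm : (H.subgroupOf M).Normal) :
    (∀ g : G, g ∉ M → M ⊓ MulAut.conj g • M ≤ H) ↔
      ∀ D : Subgroup G, D ≤ M → ¬ D ≤ H → Subgroup.normalizer (D : Set G) ≤ M := by
  constructor
  · -- forward
    intro hL D hDM hDH n hn
    by_contra hnM
    refine hDH (le_trans (le_inf hDM ?_) (hL n hnM))
    intro x hx
    rw [conjSmulMem]
    have hninv : n⁻¹ ∈ Subgroup.normalizer (D : Set G) := inv_mem hn
    have h5 := (Subgroup.mem_normalizer_iff.mp hninv x).mp hx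
    rw [inv_inv] at h5
    exact hDM h5
  · -- backward
    intro hR g hg
    classical
    by_contra hle
    rw [SetLike.not_le_iff_exists] at hle
    obtain ⟨x, hxK, hxH⟩ := hle
    -- get a prime-power element
    obtain ⟨p₀, hp₀, y, hyK, hyH, hyP⟩ :=
      extract (K := M ⊓ MulAut.conj g • M) (H := H) (orderOf x) x rfl hxK hxH
    -- Good predicate
    set Good : ℕ → Prop := fun n => ∃ (p : ℕ) (D : Subgroup G) (g' : G), p.Prime ∧ g' ∉ M ∧
      D ≤ M ∧ D ≤ MulAut.conj g' • M ∧ ¬ D ≤ H ∧ IsPGroup p D ∧ Nat.card D = n with hGooddef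
    have hbound : ∀ n, Good n → n ≤ Nat.card G := by
      rintro n ⟨p, D, g', _, _, _, _, _, _, rfl⟩
      exact Nat.le_of_dvd Nat.card_pos D.card_subgroup_dvd_card
    have hGood₀ : Good (Nat.card (Subgroup.zpowers y)) := by
      refine ⟨p₀, Subgroup.zpowers y, g, hp₀, hg, ?_, ?_, ?_, hyP, rfl⟩
      · exact le_trans (Subgroup.zpowers_le.mpr hyK) inf_le_left
      · exact le_trans (Subgroup.zpowers_le.mpr hyK) inf_le_right
      · intro hzH
        exact hyH (hzH (Subgroup.mem_zpowers y))
    set N := Nat.findGreatest Good (Nat.card G) with hNdef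
    have hGoodN : Good N := Nat.findGreatest_spec (hbound _ hGood₀) hGood₀
    obtain ⟨p, D, g', hp, hg', hDM, hDMg, hDH, hDp, hcard⟩ := hGoodN
    haveI : Fact p.Prime := ⟨hp⟩
    have hN : Subgroup.normalizer (D : Set G) ≤ M := hR D hDM hDH
    -- D is a Sylow p-subgroup of K := conj g' • M
    set K : Subgroup G := MulAut.conj g' • M with hKdef
    have hD0p : IsPGroup p (D.subgroupOf K) :=
      hDp.of_equiv (Subgroup.subgroupOfEquivOfLe hDMg).symm
    obtain ⟨Q, hDQ⟩ := hD0p.exists_le_sylow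
    set E : Subgroup G := Subgroup.map K.subtype ↑Q with hEdef
    have hEK : E ≤ K := Subgroup.map_subtype_le _
    have hDmap : Subgroup.map K.subtype (D.subgroupOf K) = D := by
      rw [Subgroup.subgroupOf_map_subtype, inf_eq_left.mpr hDMg]
    have hDE : D ≤ E := by
      rw [← hDmap]
      exact Subgroup.map_mono hDQ
    have hEp : IsPGroup p E := Q.isPGroup'.map _
    have hDeqE : D = E := by
      rcases eq_or_lt_of_le hDE with h | h
      · exact h
      · obtain ⟨F, hDF, hFE, hFnorm⟩ := grow hEp h
        have hGoodF : Good (Nat.card F) :=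
          ⟨p, F, g', hp, hg', le_trans hFnorm hN, le_trans hFE hEK,
            fun hFH => hDH (le_trans hDF.le hFH), hEp.to_le hFE, rfl⟩
        have hlt : N < Nat.card F := hcard ▸ cardLtOfLt hDF
        exact absurd hGoodF (Nat.findGreatest_is_greatest hlt (hbound _ hGoodF))
    have hcardE : Nat.card E = Nat.card Q :=
      (Nat.card_congr ((Q : Subgroup ↥K).equivMapOfInjective _ K.subtype_injective).toEquiv).symm
    have hcardD : Nat.card D = p ^ (Nat.card M).factorization p := by
      rw [hDeqE, hcardE, Q.card_eq_multiplicity, ← cardConjSmul M g']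
    -- D and D' are Sylow in M
    have hsubcard : ∀ (D' : Subgroup G) (h : D' ≤ M), Nat.card (D'.subgroupOf M) = Nat.card D' :=
      fun D' h => Nat.card_congr (Subgroup.subgroupOfEquivOfLe h).toEquiv
    set D' : Subgroup G := MulAut.conj g'⁻¹ • D with hD'def
    have hD'M : D' ≤ M := by
      have h6 := Subgroup.pointwise_smul_le_pointwise_smul_iff
        (a := MulAut.conj g'⁻¹) (S := D) (T := K) |>.mpr hDMg
      rw [hD'def, map_inv]
      rw [hKdef, map_inv, inv_smul_smul] at h6
      exact h6
    have hcardD' : Nat.card D' = Nat.card D := by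
      rw [hD'def, cardConjSmul]
    have hcard1 : Nat.card (D.subgroupOf M) = p ^ (Nat.card ↥M).factorization p := by
      rw [hsubcard D hDM, hcardD]
    have hcard2 : Nat.card (D'.subgroupOf M) = p ^ (Nat.card ↥M).factorization p := by
      rw [hsubcard D' hD'M, hcardD', hcardD]
    set S1 : Sylow p ↥M := Sylow.ofCard (D.subgroupOf M) hcard1 with hS1def
    set S2 : Sylow p ↥M := Sylow.ofCard (D'.subgroupOf M) hcard2 with hS2def
    obtain ⟨m, hm⟩ := MulAction.exists_smul_eq ↥M S2 S1
    have hmcoe : MulAut.conj m • (D'.subgroupOf M) = D.subgroupOf M := by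
      have := congrArg (fun P : Sylow p ↥M => (P : Subgroup ↥M)) hm
      simpa [Sylow.smul_def, Sylow.pointwise_smul_def, hS1def, hS2def] using this
    have hmapped : MulAut.conj (m : G) • D' = D := by
      have := congrArg (Subgroup.map M.subtype) hmcoe
      rwa [mapSmul, Subgroup.subgroupOf_map_subtype, Subgroup.subgroupOf_map_subtype,
        inf_eq_left.mpr hD'M, inf_eq_left.mpr hDM] at this
    have hfinal : MulAut.conj ((m : G) * g'⁻¹) • D = D := by
      rw [map_mul, mul_smul]
      rw [hD'def] at hmapped
      exact hmapped
    have hmem : (m : G) * g'⁻¹ ∈ Subgroup.normalizer (D : Set G) := memNormOfConjEq hfinal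
    have : (m : G) * g'⁻¹ ∈ M := hN hmem
    have hg'M : g' ∈ M := by
      have := mul_mem (inv_mem m.2) this
      rw [← mul_assoc, inv_mul_cancel, one_mul] at this
      exact inv_mem_iff.mp this
    exact hg' hg'M
end
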